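/- arXiv:1702.07964 — 9 statements merged into one kernel-verified Lean document; each statement's English description precedes it below -/
import Mathlib

section
/- Let I₀, I₁, …, I_{n-1} be closed bounded intervals of ℝ and f continuous, such that f(I_i) ⊇ I_{i+1} for 0 ≤ i < n-1 and f(I_{n-1}) ⊇ I₀. Then there exists γ ∈ I₀ with f^n(γ) = γ and f^i(γ) ∈ I_i for all 0 ≤ i < n. -/
/-!
Pull the covering chain back to `I₀` one step at a time: whenever `J ⊆ g '' K` for closed
intervals and `g` is continuous on `K`, some closed subinterval of `K` is mapped by `g`
exactly onto `J`. Iterating this along `I₀ → I₁ → ⋯ → I_{n-1} → I₀` yields a closed interval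
`K ⊆ I₀` whose points follow the itinerary and with `f^[n] '' K = I₀ ⊇ K`; the intermediate
value theorem then gives a fixed point of `f^[n]` in `K`.
-/

open Set Function

theorem exists_Icc_subset_Icc_image_eq_of_le {g : ℝ → ℝ} {u v p q : ℝ} (huv : u ≤ v)
    (hg : ContinuousOn g (Icc u v)) (hpq : p ≤ q) (hu : g u = p) (hv : g v = q) :
    ∃ s t, Icc s t ⊆ Icc u v ∧ g '' Icc s t = Icc p q := by
  -- `s` is the last preimage of `p` in `[u, v]`, and `t` the first preimage of `q` after `s`.
  obtain ⟨s, ⟨⟨hus, hsv⟩, hgs⟩, hs_max⟩ :=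
    (isCompact_Icc.of_isClosed_subset (hg.preimage_isClosed_of_isClosed isClosed_Icc
      isClosed_singleton) inter_subset_left).exists_isGreatest ⟨u, ⟨le_rfl, huv⟩, hu⟩
  have hgs' : ContinuousOn g (Icc s v) := hg.mono (Icc_subset_Icc_left hus)
  obtain ⟨t, ⟨⟨hst, htv⟩, hgt⟩, ht_min⟩ :=
    (isCompact_Icc.of_isClosed_subset (hgs'.preimage_isClosed_of_isClosed isClosed_Icc
      isClosed_singleton) inter_subset_left).exists_isLeast ⟨v, ⟨hsv, le_rfl⟩, hv⟩
  simp only [mem_preimage, mem_singleton_iff] at hgs hgt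
  refine ⟨s, t, Icc_subset_Icc hus htv, Subset.antisymm ?_ ?_⟩
  · rintro _ ⟨x, hx, rfl⟩
    constructor
    · by_contra! hlt
      obtain ⟨y, hy, hgy⟩ := intermediate_value_Icc hx.2 (hg.mono (Icc_subset_Icc
        (hus.trans hx.1) htv)) ⟨hlt.le, hgt ▸ hpq⟩
      have hys : y ≤ s := hs_max ⟨⟨hus.trans (hx.1.trans hy.1), hy.2.trans htv⟩, hgy⟩
      rw [le_antisymm hy.1 (hys.trans hx.1)] at hlt
      exact hlt.ne hgy
    · by_contra! hlt
      obtain ⟨y, hy, hgy⟩ := intermediate_value_Icc hx.1 (hgs'.mono (Icc_subset_Icc_right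
        (hx.2.trans htv))) ⟨hgs ▸ hpq, hlt.le⟩
      have hty : t ≤ y := ht_min ⟨⟨hy.1, hy.2.trans (hx.2.trans htv)⟩, hgy⟩
      rw [← le_antisymm hy.2 (hx.2.trans hty)] at hlt
      exact hlt.ne' hgy
  · simpa only [hgs, hgt] using intermediate_value_Icc hst (hgs'.mono (Icc_subset_Icc_right htv))

theorem exists_Icc_subset_Icc_image_eq {g : ℝ → ℝ} {c d p q : ℝ}
    (hg : ContinuousOn g (Icc c d)) (hcov : Icc p q ⊆ g '' Icc c d) :
    ∃ s t, Icc s t ⊆ Icc c d ∧ g '' Icc s t = Icc p q := by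
  rcases lt_or_ge q p with hqp | hpq
  · exact ⟨1, 0, by simp, by simp [Icc_eq_empty_of_lt hqp]⟩
  obtain ⟨u, hu, hgu⟩ := hcov (left_mem_Icc.2 hpq)
  obtain ⟨v, hv, hgv⟩ := hcov (right_mem_Icc.2 hpq)
  rcases le_total u v with huv | hvu
  · obtain ⟨s, t, hst, himg⟩ := exists_Icc_subset_Icc_image_eq_of_le huv
      (hg.mono (Icc_subset_Icc hu.1 hv.2)) hpq hgu hgv
    exact ⟨s, t, hst.trans (Icc_subset_Icc hu.1 hv.2), himg⟩
  · -- The preimages come in the wrong order: reflect the domain.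
    obtain ⟨s, t, hst, himg⟩ := exists_Icc_subset_Icc_image_eq_of_le (g := g ∘ Neg.neg)
      (neg_le_neg hvu) (hg.comp continuous_neg.continuousOn fun x hx =>
        ⟨by linarith [hx.2, hv.1], by linarith [hx.1, hu.2]⟩) hpq
      (by simp [hgu]) (by simp [hgv])
    refine ⟨-t, -s, ?_, ?_⟩
    · have hneg : Icc (-t) (-s) ⊆ Icc v u := by
        simpa only [neg_Icc, neg_neg] using neg_subset_neg.2 hst
      exact hneg.trans (Icc_subset_Icc hv.1 hu.2)
    · rwa [← neg_Icc, ← image_neg_eq_neg, image_image]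

theorem continuousOn_iterate_of_mapsTo {α : Type*} [TopologicalSpace α] {f : α → α}
    {s : ℕ → Set α} {t : Set α} {m : ℕ} (hf : ∀ i < m, ContinuousOn f (s i))
    (hmaps : ∀ i < m, MapsTo f^[i] t (s i)) : ContinuousOn f^[m] t := by
  induction m with
  | zero => exact continuousOn_id
  | succ m ih =>
    rw [iterate_succ']
    exact (hf m m.lt_succ_self).comp (ih (fun i hi => hf i (by omega))
      fun i hi => hmaps i (by omega)) (hmaps m m.lt_succ_self)

theorem exists_Icc_iterate_mapsTo_image_eq {f : ℝ → ℝ} {a b : ℕ → ℝ} {m : ℕ}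
    (hf : ∀ i < m, ContinuousOn f (Icc (a i) (b i)))
    (hcov : ∀ i < m, Icc (a (i + 1)) (b (i + 1)) ⊆ f '' Icc (a i) (b i)) :
    ∃ c d, (∀ i ≤ m, MapsTo f^[i] (Icc c d) (Icc (a i) (b i))) ∧
      f^[m] '' Icc c d = Icc (a m) (b m) := by
  induction m with
  | zero => exact ⟨a 0, b 0, fun i hi => by simp [Nat.le_zero.1 hi, mapsTo_id], by simp⟩
  | succ m ih =>
    obtain ⟨c, d, hmaps, himg⟩ := ih (fun i hi => hf i (by omega)) fun i hi => hcov i (by omega)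
    have hcont : ContinuousOn f^[m + 1] (Icc c d) :=
      continuousOn_iterate_of_mapsTo hf fun i hi => hmaps i (by omega)
    have hcov' : Icc (a (m + 1)) (b (m + 1)) ⊆ f^[m + 1] '' Icc c d := by
      rw [iterate_succ', image_comp, himg]
      exact hcov m m.lt_succ_self
    obtain ⟨s, t, hst, himg'⟩ := exists_Icc_subset_Icc_image_eq hcont hcov'
    refine ⟨s, t, fun i hi => ?_, himg'⟩
    rcases hi.lt_or_eq with hi | rfl
    · exact (hmaps i (by omega)).mono_left hst
    · exact mapsTo_iff_image_subset.2 himg'.subset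

theorem itinerary_lemma (n : ℕ) (hn : 0 < n) (f : ℝ → ℝ) (hf : Continuous f)
    (a b : ℕ → ℝ) (hab : ∀ i < n, a i ≤ b i)
    (hcov : ∀ i < n, Set.Icc (a ((i + 1) % n)) (b ((i + 1) % n)) ⊆ f '' Set.Icc (a i) (b i)) :
    ∃ γ ∈ Set.Icc (a 0) (b 0), f^[n] γ = γ ∧
      ∀ i < n, f^[i] γ ∈ Set.Icc (a i) (b i) := by
  obtain ⟨c, d, hmaps, himg⟩ := exists_Icc_iterate_mapsTo_image_eq (m := n)
    (a := fun i => a (i % n)) (b := fun i => b (i % n)) (fun _ _ => hf.continuousOn)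
    fun i hi => by simpa only [Nat.mod_eq_of_lt hi] using hcov i hi
  simp only [Nat.mod_self] at himg
  have hsub : Icc c d ⊆ Icc (a 0) (b 0) := fun x hx => by simpa using hmaps 0 n.zero_le hx
  have hcd : c ≤ d := nonempty_Icc.1 (image_nonempty.1 (himg ▸ nonempty_Icc.2 (hab 0 hn)))
  obtain ⟨γ, hγ, hfix⟩ := exists_mem_Icc_isFixedPt_of_surjOn (hf.iterate n).continuousOn hcd
    (hsub.trans himg.superset)
  refine ⟨γ, hsub hγ, hfix, fun i hi => ?_⟩
  simpa only [Nat.mod_eq_of_lt hi] using hmaps i hi.le hγ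
end

section
/- If a continuous map f of a closed bounded interval into itself has a periodic point of least period 3, then for every positive integer m, f has a periodic point of least period m. -/
/-!
Let `q` be the middle point of the 3-cycle, so that `q` lies strictly between `f q` and `f (f q)`,
and put `J = [[q, f q]]` and `I = [[q, f (f q)]]`. By the intermediate value theorem `f '' J`
contains `I ∪ J` and `f '' I` contains `J`. Following the loop `J → J → ⋯ → J → I → J` of length
`m` and repeatedly shrinking compact intervals to ones mapped exactly onto the next interval, we get
a point `y ∈ J` with `f^[m] y = y` whose orbit visits `J, …, J, I`. The two intervals meet only at
`q` and `f (f q) ∉ J`, which rules out any smaller period.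
-/

open Set Function
open scoped Interval

theorem exists_isFixedPt_of_uIcc_subset_image {g : ℝ → ℝ} {u v : ℝ}
    (hg : ContinuousOn g [[u, v]]) (hcov : [[u, v]] ⊆ g '' [[u, v]]) :
    ∃ y ∈ [[u, v]], IsFixedPt g y := by
  obtain ⟨s, hs, hgs⟩ := hcov (left_mem_Icc.2 inf_le_sup)
  obtain ⟨t, ht, hgt⟩ := hcov (right_mem_Icc.2 inf_le_sup)
  have hsub : [[s, t]] ⊆ [[u, v]] := uIcc_subset_uIcc hs ht
  have hzero : (0 : ℝ) ∈ [[g s - s, g t - t]] :=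
    mem_uIcc_of_le (by linarith [hs.1]) (by linarith [ht.2])
  obtain ⟨y, hy, hgy⟩ := intermediate_value_uIcc ((hg.mono hsub).sub continuousOn_id) hzero
  exact ⟨y, hsub hy, sub_eq_zero.1 hgy⟩

theorem exists_uIcc_subset_image_eq {g : ℝ → ℝ} {u v c d : ℝ}
    (hg : ContinuousOn g [[u, v]]) (hcov : [[c, d]] ⊆ g '' [[u, v]]) :
    ∃ s t, [[s, t]] ⊆ [[u, v]] ∧ g '' [[s, t]] = [[c, d]] := by
  wlog hcd : c ≤ d generalizing c d
  · simpa only [uIcc_comm c d] using this (uIcc_comm c d ▸ hcov) (le_of_not_ge hcd)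
  have hfiber : ∀ e ∈ [[c, d]],
      IsCompact ([[u, v]] ∩ g ⁻¹' {e}) ∧ ([[u, v]] ∩ g ⁻¹' {e}).Nonempty := fun e he =>
    ⟨isCompact_uIcc.of_isClosed_subset
      (hg.preimage_isClosed_of_isClosed isCompact_uIcc.isClosed isClosed_singleton)
      inter_subset_left, hcov he⟩
  -- a closest pair `(s, t)` with `g s = c` and `g t = d`
  obtain ⟨⟨s, t⟩, ⟨⟨hs, hgs⟩, ⟨ht, hgt⟩⟩, hmin⟩ :=
    ((hfiber c left_mem_uIcc).1.prod (hfiber d right_mem_uIcc).1).exists_isMinOn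
      ((hfiber c left_mem_uIcc).2.prod (hfiber d right_mem_uIcc).2)
      (continuous_fst.sub continuous_snd).abs.continuousOn
  simp only [mem_preimage, mem_singleton_iff] at hs ht hgs hgt
  replace hmin : ∀ s' ∈ [[u, v]], ∀ t' ∈ [[u, v]], g s' = c → g t' = d → |s - t| ≤ |s' - t'| :=
    fun s' hs' t' ht' hgs' hgt' => isMinOn_iff.1 hmin (s', t') ⟨⟨hs', hgs'⟩, ht', hgt'⟩
  have hst : [[s, t]] ⊆ [[u, v]] := uIcc_subset_uIcc hs ht
  refine ⟨s, t, hst, subset_antisymm ?_ (hgs ▸ hgt ▸ intermediate_value_uIcc (hg.mono hst))⟩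
  rintro _ ⟨w, hw, rfl⟩
  rw [uIcc_of_le hcd, mem_Icc]
  by_contra! hout
  rcases le_or_gt c (g w) with hcw | hwc
  · -- `d` is attained strictly closer to `s` than `t` is
    have hwd := hout hcw
    obtain ⟨z, hz, hgz⟩ := intermediate_value_uIcc (hg.mono (uIcc_subset_uIcc hs (hst hw)))
      (mem_uIcc_of_le (hgs ▸ hcd) hwd.le)
    have hclose := hmin s hs z (uIcc_subset_uIcc hs (hst hw) hz) hgs hgz
    have hwt : w ≠ t := by rintro rfl; exact hwd.ne' hgt
    simp only [mem_uIcc] at hw hz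
    grind
  · obtain ⟨z, hz, hgz⟩ := intermediate_value_uIcc (hg.mono (uIcc_subset_uIcc (hst hw) ht))
      (mem_uIcc_of_le hwc.le (hgt ▸ hcd))
    have hclose := hmin z (uIcc_subset_uIcc (hst hw) ht hz) t ht hgz hgt
    have hws : w ≠ s := by rintro rfl; exact hwc.ne hgs
    simp only [mem_uIcc] at hw hz
    grind

section Itinerary

variable {f : ℝ → ℝ} {S : Set ℝ} {I : ℕ → Set ℝ}

theorem exists_uIcc_of_itinerary (hf : ContinuousOn f S) (hS : MapsTo f S S)
    (hI : ∀ k, ∃ u v, I k = [[u, v]]) (hIS : I 0 ⊆ S) {n : ℕ}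
    (hcov : ∀ k < n, I (k + 1) ⊆ f '' I k) :
    ∃ u v, [[u, v]] ⊆ I 0 ∧ (∀ k ≤ n, MapsTo f^[k] [[u, v]] (I k)) ∧ f^[n] '' [[u, v]] = I n := by
  induction n with
  | zero =>
    obtain ⟨u, v, h⟩ := hI 0
    exact ⟨u, v, h.ge, fun k hk => by simp [Nat.le_zero.1 hk, h, mapsTo_id], by simp [h]⟩
  | succ n ih =>
    obtain ⟨u, v, hsub, hmaps, himg⟩ := ih fun k hk => hcov k (by omega)
    obtain ⟨c, d, hcd⟩ := hI (n + 1)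
    have hcov' : [[c, d]] ⊆ f^[n + 1] '' [[u, v]] := by
      rw [← hcd, iterate_succ', image_comp, himg]
      exact hcov n n.lt_succ_self
    obtain ⟨s, t, hst, himg'⟩ :=
      exists_uIcc_subset_image_eq ((hf.iterate hS _).mono (hsub.trans hIS)) hcov'
    refine ⟨s, t, hst.trans hsub, fun k hk => ?_, himg'.trans hcd.symm⟩
    rcases Nat.lt_succ_iff_lt_or_eq.1 (Nat.lt_succ_of_le hk) with hk | rfl
    · exact (hmaps k (Nat.lt_succ_iff.1 hk)).mono_left hst
    · exact mapsTo_iff_image_subset.2 (himg'.trans hcd.symm).subset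

theorem exists_isPeriodicPt_of_itinerary (hf : ContinuousOn f S) (hS : MapsTo f S S)
    (hI : ∀ k, ∃ u v, I k = [[u, v]]) (hIS : I 0 ⊆ S) {n : ℕ}
    (hcov : ∀ k < n, I (k + 1) ⊆ f '' I k) (hloop : I n = I 0) :
    ∃ y, IsPeriodicPt f n y ∧ ∀ k ≤ n, f^[k] y ∈ I k := by
  obtain ⟨u, v, hsub, hmaps, himg⟩ := exists_uIcc_of_itinerary hf hS hI hIS hcov
  obtain ⟨y, hy, hfix⟩ := exists_isFixedPt_of_uIcc_subset_image
    ((hf.iterate hS n).mono (hsub.trans hIS)) (himg ▸ hloop ▸ hsub)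
  exact ⟨y, hfix, fun k hk => hmaps k hk hy⟩

end Itinerary

section Order

variable {α : Type*}

theorem minimalPeriod_eq_of_itinerary {f : α → α} {I J : Set α} {q y : α} {n : ℕ}
    (hper : IsPeriodicPt f (n + 1) y) (hJ : ∀ k < n, f^[k] y ∈ J) (hI : f^[n] y ∈ I)
    (hIJ : I ∩ J ⊆ {q}) (hq : f (f q) ∉ J) :
    minimalPeriod f y = n + 1 := by
  have hp : 0 < minimalPeriod f y := hper.minimalPeriod_pos n.succ_pos
  by_contra hne
  have hpn : minimalPeriod f y ≤ n := by have := hper.minimalPeriod_le n.succ_pos; omega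
  -- a period `≤ n` would keep the whole orbit inside `J`
  have hJ' : ∀ j, f^[j] y ∈ J := fun j =>
    iterate_mod_minimalPeriod_eq (f := f) ▸ hJ _ ((Nat.mod_lt j hp).trans_le hpn)
  have hq' : f^[n] y = q := hIJ ⟨hI, hJ' n⟩
  have hfy : f y = f (f q) := by rw [← hper.eq, iterate_succ_apply', hq']
  exact hq (hfy ▸ hJ' 1)

variable [LinearOrder α]

theorem uIcc_inter_uIcc_subset_of_mem_uIoo {a b q : α} (h : q ∈ uIoo a b) :
    [[q, b]] ∩ [[q, a]] ⊆ {q} := by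
  rintro x ⟨hb, ha⟩
  simp only [uIoo, mem_Ioo, mem_uIcc] at h ha hb
  grind

theorem notMem_uIcc_of_mem_uIoo {a b q : α} (h : q ∈ uIoo a b) : b ∉ [[q, a]] := by
  simp only [uIoo, mem_Ioo, mem_uIcc] at h ⊢
  grind

theorem exists_iterate_mem_uIoo_of_isPeriodicPt_three {f : α → α} {x : α}
    (h3 : IsPeriodicPt f 3 x) (hx : ¬IsFixedPt f x) :
    ∃ k, f^[k] x ∈ uIoo (f (f^[k] x)) (f (f (f^[k] x))) := by
  have h3' : f (f (f x)) = x := h3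
  have h02 : f (f x) ≠ x := fun h => hx ((congrArg f h).symm.trans h3')
  have h12 : f (f x) ≠ f x := fun h => hx (h3'.symm.trans ((congrArg f h).trans h)).symm
  have : x ∈ uIoo (f x) (f (f x)) ∨ f x ∈ uIoo (f (f x)) x ∨ f (f x) ∈ uIoo x (f x) := by
    simp only [uIoo, mem_Ioo, inf_lt_iff, lt_sup_iff]
    unfold IsFixedPt at hx
    grind
  rcases this with h | h | h
  · exact ⟨0, h⟩
  · exact ⟨1, by simpa [h3'] using h⟩
  · exact ⟨2, by simpa [h3'] using h⟩

end Order

section CoveringIntervals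

variable {f : ℝ → ℝ} {S : Set ℝ}

theorem exists_minimalPeriod_eq_of_covers (hf : ContinuousOn f S) (hS : MapsTo f S S)
    {I J : Set ℝ} (hI : ∃ u v, I = [[u, v]]) (hJ : ∃ u v, J = [[u, v]]) (hJS : J ⊆ S)
    (hJJ : J ⊆ f '' J) (hIJ : I ⊆ f '' J) (hJI : J ⊆ f '' I) {q : ℝ} (hIJq : I ∩ J ⊆ {q})
    (hq : f (f q) ∉ J) {m : ℕ} (hm : 0 < m) :
    ∃ y ∈ J, minimalPeriod f y = m := by
  obtain ⟨n, rfl⟩ := Nat.exists_eq_add_one.2 hm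
  rcases n.eq_zero_or_pos with rfl | hn
  · obtain ⟨u, v, rfl⟩ := hJ
    obtain ⟨y, hy, hfix⟩ := exists_isFixedPt_of_uIcc_subset_image (hf.mono hJS) hJJ
    exact ⟨y, hy, minimalPeriod_eq_one_iff_isFixedPt.2 hfix⟩
  let K : ℕ → Set ℝ := fun k => if k = n then I else J
  have hK : ∀ k, ∃ u v, K k = [[u, v]] := fun k => by
    by_cases hk : k = n <;> simp only [K, hk, if_true, if_false, hI, hJ]
  have hKcov : ∀ k < n + 1, K (k + 1) ⊆ f '' K k := fun k hk => by
    simp only [K]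
    split_ifs
    exacts [by omega, hIJ, hJI, hJJ]
  obtain ⟨y, hper, hit⟩ := exists_isPeriodicPt_of_itinerary hf hS hK
    (by simpa [K, hn.ne] using hJS) hKcov (by simp [K, hn.ne])
  refine ⟨y, by simpa [K, hn.ne] using hit 0 (by omega), ?_⟩
  exact minimalPeriod_eq_of_itinerary hper
    (fun k hk => by simpa [K, hk.ne] using hit k (by omega)) (by simpa [K] using hit n (by omega))
    hIJq hq

theorem exists_minimalPeriod_eq_of_mem_uIoo (hf : ContinuousOn f S) (hS : MapsTo f S S)
    (hSc : S.OrdConnected) {q : ℝ} (hqS : q ∈ S) (hq3 : IsPeriodicPt f 3 q)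
    (hmid : q ∈ uIoo (f q) (f (f q))) {m : ℕ} (hm : 0 < m) :
    ∃ y ∈ S, minimalPeriod f y = m := by
  have hJS : [[q, f q]] ⊆ S := hSc.uIcc_subset hqS (hS hqS)
  have hJ : [[f q, f (f q)]] ⊆ f '' [[q, f q]] := intermediate_value_uIcc (hf.mono hJS)
  have hI : [[f q, q]] ⊆ f '' [[q, f (f q)]] := by
    simpa only [show f (f (f q)) = q from hq3] using intermediate_value_uIcc (f := f)
      (hf.mono (hSc.uIcc_subset hqS (hS (hS hqS))))
  have hqmem : q ∈ [[f q, f (f q)]] := uIoo_subset_uIcc_self hmid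
  obtain ⟨y, hy, hym⟩ := exists_minimalPeriod_eq_of_covers hf hS ⟨_, _, rfl⟩ ⟨_, _, rfl⟩ hJS
    ((uIcc_subset_uIcc hqmem left_mem_uIcc).trans hJ)
    ((uIcc_subset_uIcc hqmem right_mem_uIcc).trans hJ) (uIcc_comm q (f q) ▸ hI)
    (uIcc_inter_uIcc_subset_of_mem_uIoo hmid) (notMem_uIcc_of_mem_uIoo hmid) hm
  exact ⟨y, hJS hy, hym⟩

end CoveringIntervals

theorem period_three_implies_all_periods_general (a b : ℝ) (f : ℝ → ℝ)
    (hc : ContinuousOn f (Set.Icc a b))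
    (hmaps : Set.MapsTo f (Set.Icc a b) (Set.Icc a b))
    (x : ℝ) (hx : x ∈ Set.Icc a b)
    (hx3 : f^[3] x = x ∧ ∀ k, 0 < k → k < 3 → f^[k] x ≠ x)
    (m : ℕ) (hm : 0 < m) :
    ∃ y ∈ Set.Icc a b, f^[m] y = y ∧ ∀ k, 0 < k → k < m → f^[k] y ≠ y := by
  obtain ⟨h3, hlt⟩ := hx3
  obtain ⟨k, hk⟩ := exists_iterate_mem_uIoo_of_isPeriodicPt_three (f := f) h3
    (hlt 1 one_pos (by norm_num))
  obtain ⟨y, hy, hym⟩ := exists_minimalPeriod_eq_of_mem_uIoo hc hmaps ordConnected_Icc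
    (hmaps.iterate k hx) (IsPeriodicPt.apply_iterate h3 k) hk hm
  exact ⟨y, hy, hym ▸ iterate_minimalPeriod, fun j hj hjm =>
    not_isPeriodicPt_of_pos_of_lt_minimalPeriod hj.ne' (hym ▸ hjm)⟩

theorem period_three_implies_all_periods (a b : ℝ) (hab : a ≤ b) (f : ℝ → ℝ)
    (hc : ContinuousOn f (Set.Icc a b))
    (hmaps : Set.MapsTo f (Set.Icc a b) (Set.Icc a b))
    (x : ℝ) (hx : x ∈ Set.Icc a b)
    (hx3 : f^[3] x = x ∧ ∀ k, 0 < k → k < 3 → f^[k] x ≠ x)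
    (m : ℕ) (hm : 0 < m) :
    ∃ y ∈ Set.Icc a b, f^[m] y = y ∧ ∀ k, 0 < k → k < m → f^[k] y ≠ y :=
  period_three_implies_all_periods_general a b f hc hmaps x hx hx3 m hm
end

section
/- A continuous map f : I → I of a closed bounded interval into itself has a periodic point of least period 2 if and only if there exists a point ξ ∈ I such that f(ξ) ≠ ξ and ξ belongs to f applied to the closed interval with endpoints ξ and f(ξ). -/
/-!
Suppose `f x < x < f (f x)` but every point of period two in `I = [a, b]` is fixed. By the
intermediate value theorem for `f²` on `[x, b]` there is a fixed point to the right of `x`;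
let `z` be the least one. Neither `f` nor `f²` has a fixed point in `[x, z)`, so
`f t < t < f² t` there, and then `f t < x` (if `f t` were in `[x, z)` we would get
`f² t < f t < t`). Letting `t → z` gives `z = f z ≤ x`, a contradiction.

If `f η = ξ` with `η` between `ξ` and `f ξ ≠ ξ`, then either `η = f ξ` is of period two, or `η`
is such a point `x` (when `ξ < f ξ`) or the same configuration with the order reversed.
-/

open Set Function OrderDual

variable {α : Type*} [ConditionallyCompleteLinearOrder α] [TopologicalSpace α] [OrderTopology α]
  {f : α → α} {a b x y : α}

theorem exists_isLeast_isFixedPt (hf : ContinuousOn f (Icc a b))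
    (hfix : ∃ p ∈ Icc a b, IsFixedPt f p) : ∃ z, IsLeast {t ∈ Icc a b | IsFixedPt f t} z :=
  (isCompact_Icc.of_isClosed_subset (isClosed_Icc.isClosed_eq hf continuousOn_id)
    (sep_subset _ _)).exists_isLeast hfix

variable [DenselyOrdered α]

theorem lt_apply_of_lt_apply_of_not_isFixedPt (hf : ContinuousOn f (uIcc x y))
    (hfix : ∀ t ∈ uIcc x y, ¬IsFixedPt f t) (hx : x < f x) : y < f y := by
  by_contra! hy
  obtain ⟨c, hc, hfc⟩ := exists_mem_uIcc_isFixedPt hf hx.le hy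
  exact hfix c hc hfc

theorem apply_lt_of_apply_lt_of_not_isFixedPt (hf : ContinuousOn f (uIcc x y))
    (hfix : ∀ t ∈ uIcc x y, ¬IsFixedPt f t) (hx : f x < x) : f y < y := by
  rw [uIcc_comm] at hf hfix
  by_contra! hy
  obtain ⟨c, hc, hfc⟩ := exists_mem_uIcc_isFixedPt hf hy hx.le
  exact hfix c hc hfc

theorem exists_isPeriodicPt_two_of_apply_lt_of_lt_apply_apply (hf : ContinuousOn f (Icc a b))
    (hmaps : MapsTo f (Icc a b) (Icc a b)) (hx : x ∈ Icc a b) (hfx : f x < x)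
    (hffx : x < f (f x)) : ∃ y ∈ Icc a b, IsPeriodicPt f 2 y ∧ ¬IsFixedPt f y := by
  by_contra! H
  have hsub : Icc x b ⊆ Icc a b := Icc_subset_Icc_left hx.1
  have hf' : ContinuousOn f (Icc x b) := hf.mono hsub
  have hf₂ : ContinuousOn f^[2] (Icc x b) := (hf.iterate hmaps 2).mono hsub
  have hfb : f^[2] b ≤ b := (hmaps.iterate 2 (right_mem_Icc.2 (hx.1.trans hx.2))).2
  obtain ⟨p, hp, hfp⟩ := exists_mem_Icc_isFixedPt hf₂ hx.2 hffx.le hfb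
  obtain ⟨z, ⟨hz, hfz⟩, hz_least⟩ := exists_isLeast_isFixedPt hf' ⟨p, hp, H p (hsub hp) hfp⟩
  have hxz : x < z := hz.1.lt_of_ne (by rintro rfl; exact hfx.ne hfz)
  have huIcc : ∀ t ∈ Ico x z, uIcc x t ⊆ Ico x z := fun t ht =>
    (uIcc_of_le ht.1).symm ▸ Icc_subset_Ico_right ht.2
  have hfree : ∀ t ∈ Ico x z, ¬IsFixedPt f t := fun t ht hft =>
    (hz_least ⟨⟨ht.1, ht.2.le.trans hz.2⟩, hft⟩).not_gt ht.2
  have hfree₂ : ∀ t ∈ Ico x z, ¬IsFixedPt f^[2] t := fun t ht hft =>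
    hfree t ht (H t (hsub ⟨ht.1, ht.2.le.trans hz.2⟩) hft)
  have hIco : Ico x z ⊆ Icc x b := Ico_subset_Icc_self.trans (Icc_subset_Icc_right hz.2)
  have hcont : ∀ t ∈ Ico x z, uIcc x t ⊆ Icc x b := fun t ht => (huIcc t ht).trans hIco
  have hbelow : ∀ t ∈ Ico x z, f t < t := fun t ht =>
    apply_lt_of_apply_lt_of_not_isFixedPt (hf'.mono (hcont t ht))
      (fun s hs => hfree s (huIcc t ht hs)) hfx
  have habove : ∀ t ∈ Ico x z, t < f^[2] t := fun t ht =>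
    lt_apply_of_lt_apply_of_not_isFixedPt (hf₂.mono (hcont t ht))
      (fun s hs => hfree₂ s (huIcc t ht hs)) hffx
  have hleft : ∀ t ∈ Ico x z, f t < x := fun t ht => by
    by_contra! h
    have := hbelow (f t) ⟨h, (hbelow t ht).trans ht.2⟩
    exact (habove t ht).not_gt (this.trans (hbelow t ht))
  have hfz_le : f z ≤ x :=
    ContinuousWithinAt.closure_le (by rw [closure_Ico hxz.ne]; exact right_mem_Icc.2 hxz.le)
      ((hf' z hz).mono hIco)
      continuousWithinAt_const (fun t ht => (hleft t ht).le)
  rw [hfz.eq] at hfz_le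
  exact hfz_le.not_gt hxz

theorem exists_isPeriodicPt_two_of_lt_apply_of_apply_apply_lt (hf : ContinuousOn f (Icc a b))
    (hmaps : MapsTo f (Icc a b) (Icc a b)) (hx : x ∈ Icc a b) (hfx : x < f x)
    (hffx : f (f x) < x) : ∃ y ∈ Icc a b, IsPeriodicPt f 2 y ∧ ¬IsFixedPt f y := by
  have hI : Icc (toDual b) (toDual a) = ofDual ⁻¹' Icc a b := Icc_toDual
  obtain ⟨y, hy, h⟩ := exists_isPeriodicPt_two_of_apply_lt_of_lt_apply_apply (α := αᵒᵈ)
    (f := toDual ∘ f ∘ ofDual) (by rw [hI]; exact hf) (by rw [hI]; exact hmaps)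
    (by rw [hI]; exact hx) hfx hffx
  rw [hI] at hy
  exact ⟨y, hy, h⟩

theorem exists_isPeriodicPt_two_of_mem_image_uIcc (hf : ContinuousOn f (Icc a b))
    (hmaps : MapsTo f (Icc a b) (Icc a b)) (hx : x ∈ Icc a b) (hne : ¬IsFixedPt f x)
    (hmem : x ∈ f '' uIcc x (f x)) : ∃ y ∈ Icc a b, IsPeriodicPt f 2 y ∧ ¬IsFixedPt f y := by
  obtain ⟨y, hy, hfy⟩ := hmem
  rcases eq_or_ne y (f x) with rfl | hyfx
  · exact ⟨x, hx, hfy, hne⟩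
  have hyI : y ∈ Icc a b := uIcc_subset_Icc hx (hmaps hx) hy
  have hyx : y ≠ x := by rintro rfl; exact hne hfy
  have hffy : f (f y) = f x := by rw [hfy]
  rcases lt_or_gt_of_ne hne with hlt | hgt
  · rw [uIcc_of_ge hlt.le] at hy
    exact exists_isPeriodicPt_two_of_lt_apply_of_apply_apply_lt hf hmaps hyI
      (hfy ▸ hy.2.lt_of_ne hyx) (hffy ▸ hy.1.lt_of_ne' hyfx)
  · rw [uIcc_of_le hgt.le] at hy
    exact exists_isPeriodicPt_two_of_apply_lt_of_lt_apply_apply hf hmaps hyI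
      (hfy ▸ hy.1.lt_of_ne' hyx) (hffy ▸ hy.2.lt_of_ne hyfx)

theorem exists_isPeriodicPt_two_iff (hf : ContinuousOn f (Icc a b))
    (hmaps : MapsTo f (Icc a b) (Icc a b)) :
    (∃ y ∈ Icc a b, IsPeriodicPt f 2 y ∧ ¬IsFixedPt f y) ↔
      ∃ x ∈ Icc a b, ¬IsFixedPt f x ∧ x ∈ f '' uIcc x (f x) :=
  ⟨fun ⟨y, hy, h2, hne⟩ => ⟨y, hy, hne, f y, right_mem_uIcc, h2⟩,
    fun ⟨_, hx, hne, hmem⟩ => exists_isPeriodicPt_two_of_mem_image_uIcc hf hmaps hx hne hmem⟩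

theorem period_two_iff_general (a b : ℝ) (f : ℝ → ℝ)
    (hc : ContinuousOn f (Set.Icc a b))
    (hmaps : Set.MapsTo f (Set.Icc a b) (Set.Icc a b)) :
    (∃ x ∈ Set.Icc a b, f^[2] x = x ∧ f x ≠ x) ↔
      (∃ ξ ∈ Set.Icc a b, f ξ ≠ ξ ∧ ξ ∈ f '' Set.uIcc ξ (f ξ)) :=
  exists_isPeriodicPt_two_iff hc hmaps

theorem period_two_iff (a b : ℝ) (hab : a ≤ b) (f : ℝ → ℝ)
    (hc : ContinuousOn f (Set.Icc a b))
    (hmaps : Set.MapsTo f (Set.Icc a b) (Set.Icc a b)) :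
    (∃ x ∈ Set.Icc a b, f^[2] x = x ∧ f x ≠ x) ↔
      (∃ ξ ∈ Set.Icc a b, f ξ ≠ ξ ∧ ξ ∈ f '' Set.uIcc ξ (f ξ)) :=
  period_two_iff_general a b f hc hmaps
end

section
/- If a continuous map f : I → I of a closed bounded interval into itself has a periodic point of least period m for some m > 2, then f has a periodic point of least period 2. -/
open Set

private lemma reflect_iter (f : ℝ → ℝ) (s : ℝ) :
    ∀ (k : ℕ) (t : ℝ), (fun u => s - f (s - u))^[k] t = s - (f^[k] (s - t)) := by
  intro k
  induction k with
  | zero => intro t; simp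
  | succ n ih =>
    intro t
    rw [Function.iterate_succ_apply, ih, Function.iterate_succ_apply]
    have h : s - (s - f (s - t)) = f (s - t) := by ring
    rw [h]

private lemma stepA (a b : ℝ) (f : ℝ → ℝ)
    (hc : ContinuousOn f (Set.Icc a b))
    (hmaps : Set.MapsTo f (Set.Icc a b) (Set.Icc a b))
    (no2 : ∀ y ∈ Set.Icc a b, f (f y) = y → f y = y)
    (w : ℝ) (hw : w ∈ Set.Icc a b) (n : ℕ) (hn : 0 < n) (hwper : f^[n] w = w)
    (h1 : w < f w) (h2 : f (f w) < w) : False := by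
  obtain ⟨haw, hwb⟩ := hw
  have hfw : f w ∈ Set.Icc a b := hmaps ⟨haw, hwb⟩
  have hg : ContinuousOn (fun t => f t - t) (Set.Icc a b) := hc.sub continuousOn_id
  have hgg : ContinuousOn (fun t => f (f t) - t) (Set.Icc a b) :=
    (hc.comp hc hmaps).sub continuousOn_id
  -- the least fixed point z of f above w
  set T : Set ℝ := Set.Icc w b ∩ (fun t => f t - t) ⁻¹' (Set.Iic 0) with hT
  have hTc : IsClosed T :=
    ContinuousOn.preimage_isClosed_of_isClosed
      (hg.mono (Set.Icc_subset_Icc_left haw)) isClosed_Icc isClosed_Iic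
  have hTne : T.Nonempty := ⟨f w, ⟨h1.le, hfw.2⟩, by
    simp only [Set.mem_preimage, Set.mem_Iic]; linarith⟩
  have hTbdd : BddBelow T := ⟨w, fun t ht => ht.1.1⟩
  set z := sInf T with hzdef
  have hzT : z ∈ T := hTc.csInf_mem hTne hTbdd
  have hwz' : w ≤ z := hzT.1.1
  have hzb : z ≤ b := hzT.1.2
  have hfz_le : f z ≤ z := by
    have h := hzT.2; simp only [Set.mem_preimage, Set.mem_Iic] at h; linarith
  have hup : ∀ t, w ≤ t → t < z → t < f t := by
    intro t hwt htz
    by_contra hcon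
    push_neg at hcon
    have ht : t ∈ T := ⟨⟨hwt, htz.le.trans hzb⟩, by
      simp only [Set.mem_preimage, Set.mem_Iic]; linarith⟩
    exact absurd (csInf_le hTbdd ht) (not_le.mpr htz)
  have hwz : w < z := by
    rcases eq_or_lt_of_le hwz' with h | h
    · exfalso; rw [← h] at hfz_le; linarith
    · exact h
  have hzI : z ∈ Set.Icc a b := ⟨haw.trans hwz', hzb⟩
  -- z is a fixed point
  have hfz : f z = z := by
    have hsub : Set.Icc w z ⊆ Set.Icc a b := Set.Icc_subset_Icc haw hzb
    have hIVT := intermediate_value_Icc' hwz' (hg.mono hsub)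
    have h0 : (0 : ℝ) ∈ Set.Icc (f z - z) (f w - w) := ⟨by linarith, by linarith⟩
    obtain ⟨s, hs, hgs⟩ := hIVT h0
    simp only [sub_eq_zero] at hgs
    have hsz : s = z := by
      rcases eq_or_lt_of_le hs.2 with h | h
      · exact h
      · exfalso
        have := hup s hs.1 h
        rw [hgs] at this
        exact lt_irrefl s this
    rw [← hsz]; exact hgs
  -- case split on whether f has a "below" point in [a, w]
  set S : Set ℝ := Set.Icc a w ∩ (fun t => f t - t) ⁻¹' (Set.Iic 0) with hS
  by_cases hSne : S.Nonempty
  · -- case S nonempty : greatest point ℓ ≤ w with f ℓ ≤ ℓ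
    have hSc : IsClosed S :=
      ContinuousOn.preimage_isClosed_of_isClosed
        (hg.mono (Set.Icc_subset_Icc_right hwb)) isClosed_Icc isClosed_Iic
    have hSbdd : BddAbove S := ⟨w, fun t ht => ht.1.2⟩
    set l := sSup S with hldef
    have hlS : l ∈ S := hSc.csSup_mem hSne hSbdd
    have hal : a ≤ l := hlS.1.1
    have hlw' : l ≤ w := hlS.1.2
    have hfl : f l ≤ l := by
      have h := hlS.2; simp only [Set.mem_preimage, Set.mem_Iic] at h; linarith
    have hlw : l < w := by
      rcases eq_or_lt_of_le hlw' with h | h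
      · exfalso; rw [h] at hfl; linarith
      · exact h
    have hup2 : ∀ t, l < t → t < z → t < f t := by
      intro t hlt htz
      rcases le_or_gt t w with htw | hwt
      · by_contra hcon
        push_neg at hcon
        have ht : t ∈ S := ⟨⟨hal.trans hlt.le, htw⟩, by
          simp only [Set.mem_preimage, Set.mem_Iic]; linarith⟩
        exact absurd (le_csSup hSbdd ht) (not_le.mpr hlt)
      · exact hup t hwt.le htz
    have htI : ∀ t, l < t → t < z → t ∈ Set.Icc a b :=
      fun t h1' h2' => ⟨hal.trans h1'.le, h2'.le.trans hzb⟩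
    have hfft : ∀ t, l < t → t < z → f (f t) < t := by
      intro t hlt htz
      rcases lt_trichotomy (f (f t)) t with h | h | h
      · exact h
      · exact absurd (no2 t (htI t hlt htz) h) (ne_of_lt (hup2 t hlt htz)).symm
      · exfalso
        have hsub : Set.uIcc t w ⊆ Set.Icc a b :=
          Set.uIcc_subset_Icc (htI t hlt htz) ⟨haw, hwb⟩
        have h0 : (0:ℝ) ∈ Set.uIcc (f (f w) - w) (f (f t) - t) := by
          rw [Set.mem_uIcc]; left; constructor <;> linarith
        obtain ⟨s, hs, hgs⟩ := intermediate_value_uIcc (hgg.mono ((Set.uIcc_comm t w) ▸ hsub)) h0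
        have hls : l < s ∧ s < z := by
          rw [Set.mem_uIcc] at hs
          rcases hs with ⟨hs1, hs2⟩ | ⟨hs1, hs2⟩ <;>
            exact ⟨by rcases le_or_gt w t with _|_ <;> linarith,
                   by rcases le_or_gt w t with _|_ <;> linarith⟩
        simp only [sub_eq_zero] at hgs
        have hfs : f s = s := no2 s (htI s hls.1 hls.2) hgs
        exact absurd (hup2 s hls.1 hls.2) (by rw [hfs]; exact lt_irrefl s)
    have hfge : ∀ t, l < t → t ≤ w → z ≤ f t := by
      intro t hlt htw
      by_contra hcon
      push_neg at hcon
      have ht1 : t < f t := hup2 t hlt (lt_of_le_of_lt htw hwz)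
      have ht2 : f t < f (f t) := hup2 (f t) (hlt.trans ht1) hcon
      have := hfft t hlt (lt_of_le_of_lt htw hwz)
      linarith
    -- continuity contradiction at l
    have hcl : ContinuousWithinAt f (Set.Icc a b) l := hc l ⟨hal, hlw'.trans hwb⟩
    rw [Metric.continuousWithinAt_iff] at hcl
    have hflz : f l < z := lt_of_le_of_lt hfl (lt_of_le_of_lt hlw' hwz)
    obtain ⟨δ, hδ, hH⟩ := hcl (z - f l) (by linarith)
    set t := min w (l + δ/2) with htdef
    have hlt : l < t := lt_min hlw (by linarith)
    have htw : t ≤ w := min_le_left _ _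
    have htab : t ∈ Set.Icc a b := ⟨hal.trans hlt.le, htw.trans hwb⟩
    have hdist : dist t l < δ := by
      rw [Real.dist_eq, abs_of_pos (by linarith)]
      have : t ≤ l + δ/2 := min_le_right _ _
      linarith
    have := hH htab hdist
    rw [Real.dist_eq] at this
    have habs := abs_lt.mp this
    have := hfge t hlt htw
    linarith [habs.2]
  · -- case S empty : f t > t on [a, w]
    have hup2 : ∀ t, a ≤ t → t < z → t < f t := by
      intro t hat htz
      rcases le_or_gt t w with htw | hwt
      · by_contra hcon
        push_neg at hcon
        exact hSne ⟨t, ⟨hat, htw⟩, by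
          simp only [Set.mem_preimage, Set.mem_Iic]; linarith⟩
      · exact hup t hwt.le htz
    have htI : ∀ t, a ≤ t → t < z → t ∈ Set.Icc a b :=
      fun t h1' h2' => ⟨h1', h2'.le.trans hzb⟩
    have hfft : ∀ t, a ≤ t → t < z → f (f t) < t := by
      intro t hat htz
      rcases lt_trichotomy (f (f t)) t with h | h | h
      · exact h
      · exact absurd (no2 t (htI t hat htz) h) (ne_of_lt (hup2 t hat htz)).symm
      · exfalso
        have hsub : Set.uIcc t w ⊆ Set.Icc a b :=
          Set.uIcc_subset_Icc (htI t hat htz) ⟨haw, hwb⟩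
        have h0 : (0:ℝ) ∈ Set.uIcc (f (f w) - w) (f (f t) - t) := by
          rw [Set.mem_uIcc]; left; constructor <;> linarith
        obtain ⟨s, hs, hgs⟩ := intermediate_value_uIcc (hgg.mono ((Set.uIcc_comm t w) ▸ hsub)) h0
        have hls : a ≤ s ∧ s < z := by
          rw [Set.mem_uIcc] at hs
          rcases hs with ⟨hs1, hs2⟩ | ⟨hs1, hs2⟩ <;>
            exact ⟨by rcases le_or_gt w t with _|_ <;> linarith,
                   by rcases le_or_gt w t with _|_ <;> linarith⟩
        simp only [sub_eq_zero] at hgs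
        have hfs : f s = s := no2 s (htI s hls.1 hls.2) hgs
        exact absurd (hup2 s hls.1 hls.2) (by rw [hfs]; exact lt_irrefl s)
    -- descent along the orbit of w
    have hdesc : ∀ k : ℕ, f^[2*k] w ∈ Set.Icc a w ∧ (0 < k → f^[2*k] w < w) := by
      intro k
      induction k with
      | zero => exact ⟨⟨haw, le_refl w⟩, fun h => absurd h (lt_irrefl 0)⟩
      | succ j ih =>
        obtain ⟨⟨hau, huw⟩, _⟩ := ih
        have hiter : f^[2*(j+1)] w = f (f (f^[2*j] w)) := by
          have h21 : 2*(j+1) = 2 + 2*j := by ring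
          rw [h21, Function.iterate_add_apply]
          rw [show (2:ℕ) = 1 + 1 from rfl, Function.iterate_add_apply]
          simp [Function.iterate_one]
        have huab : f^[2*j] w ∈ Set.Icc a b := ⟨hau, huw.trans hwb⟩
        have hlt : f (f (f^[2*j] w)) < f^[2*j] w :=
          hfft _ hau (lt_of_le_of_lt huw hwz)
        have hmem : f (f (f^[2*j] w)) ∈ Set.Icc a b := hmaps (hmaps huab)
        constructor
        · rw [hiter]; exact ⟨hmem.1, by linarith⟩
        · intro _; rw [hiter]; linarith
    have hfin : f^[2*n] w = w := by
      have : 2*n = n + n := by ring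
      rw [this, Function.iterate_add_apply, hwper, hwper]
    have := (hdesc n).2 hn
    rw [hfin] at this
    exact lt_irrefl w this

private lemma stepA' (a b : ℝ) (f : ℝ → ℝ)
    (hc : ContinuousOn f (Set.Icc a b))
    (hmaps : Set.MapsTo f (Set.Icc a b) (Set.Icc a b))
    (no2 : ∀ y ∈ Set.Icc a b, f (f y) = y → f y = y)
    (w : ℝ) (hw : w ∈ Set.Icc a b) (n : ℕ) (hn : 0 < n) (hwper : f^[n] w = w)
    (h1 : f w < w) (h2 : w < f (f w)) : False := by
  set s := a + b with hs
  set g : ℝ → ℝ := fun u => s - f (s - u) with hgdef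
  have hmem : ∀ u : ℝ, u ∈ Set.Icc a b → s - u ∈ Set.Icc a b := by
    intro u hu; exact ⟨by simp only [hs]; linarith [hu.2], by simp only [hs]; linarith [hu.1]⟩
  have hcg : ContinuousOn g (Set.Icc a b) := by
    apply ContinuousOn.sub continuousOn_const
    exact hc.comp (continuousOn_const.sub continuousOn_id) (fun u hu => hmem u hu)
  have hmapsg : Set.MapsTo g (Set.Icc a b) (Set.Icc a b) := by
    intro u hu
    have := hmaps (hmem u hu)
    exact ⟨by simp only [hgdef, hs]; linarith [this.2], by simp only [hgdef, hs]; linarith [this.1]⟩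
  have hno2g : ∀ y ∈ Set.Icc a b, g (g y) = y → g y = y := by
    intro y hy hgg
    have h1' : g (g y) = s - f (f (s - y)) := by
      simp only [hgdef]
      have : s - (s - f (s - y)) = f (s - y) := by ring
      rw [this]
    rw [h1'] at hgg
    have : f (f (s - y)) = s - y := by linarith
    have := no2 (s - y) (hmem y hy) this
    simp only [hgdef]; rw [this]; ring
  have hwg : s - w ∈ Set.Icc a b := hmem w hw
  have hperg : g^[n] (s - w) = s - w := by
    rw [reflect_iter f s n (s - w)]
    have : s - (s - w) = w := by ring
    rw [this, hwper]
  have h1g : s - w < g (s - w) := by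
    simp only [hgdef]
    have : s - (s - w) = w := by ring
    rw [this]; linarith
  have h2g : g (g (s - w)) < s - w := by
    have hgsw : g (s - w) = s - f w := by
      simp only [hgdef]
      have : s - (s - w) = w := by ring
      rw [this]
    rw [hgsw]
    simp only [hgdef]
    have : s - (s - f w) = f w := by ring
    rw [this]; linarith
  exact stepA a b g hcg hmapsg hno2g (s - w) hwg n hn hperg h1g h2g

private lemma covering (a b : ℝ) (f : ℝ → ℝ)
    (hc : ContinuousOn f (Set.Icc a b))
    (α β γ δ : ℝ) (haα : a ≤ α) (hαβ : α ≤ β) (hβγ : β < γ) (hγδ : γ < δ) (hδb : δ ≤ b)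
    (la lb ra rb : ℝ)
    (hla : la ∈ Set.Icc α β) (hlb : lb ∈ Set.Icc α β)
    (hra : ra ∈ Set.Icc γ δ) (hrb : rb ∈ Set.Icc γ δ)
    (hfla : f la ≤ γ) (hflb : δ ≤ f lb)
    (hfra : f ra ≤ α) (hfrb : β ≤ f rb) :
    ∃ y ∈ Set.Icc a b, f (f y) = y ∧ f y ≠ y := by
  have hβb : β ≤ b := by linarith
  have haγ : a ≤ γ := by linarith
  have hA : Set.Icc α β ⊆ Set.Icc a b := Set.Icc_subset_Icc haα hβb
  have hB : Set.Icc γ δ ⊆ Set.Icc a b := Set.Icc_subset_Icc haγ hδb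
  have huIcc_sub : Set.uIcc la lb ⊆ Set.Icc α β := Set.uIcc_subset_Icc hla hlb
  have hcu : ContinuousOn f (Set.uIcc la lb) := hc.mono (huIcc_sub.trans hA)
  obtain ⟨e1, he1mem, he1⟩ := intermediate_value_uIcc hcu
    (show γ ∈ Set.uIcc (f la) (f lb) by rw [Set.mem_uIcc]; left; exact ⟨hfla, by linarith⟩)
  obtain ⟨e2, he2mem, he2⟩ := intermediate_value_uIcc hcu
    (show δ ∈ Set.uIcc (f la) (f lb) by rw [Set.mem_uIcc]; left; exact ⟨by linarith, hflb⟩)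
  have he1A : e1 ∈ Set.Icc α β := huIcc_sub he1mem
  have he2A : e2 ∈ Set.Icc α β := huIcc_sub he2mem
  rcases le_total e1 e2 with hord | hord
  · -- e1 ≤ e2 : f e1 = γ , f e2 = δ
    have hsub12 : Set.Icc e1 e2 ⊆ Set.Icc α β := Set.Icc_subset_Icc he1A.1 he2A.2
    set V : Set ℝ := Set.Icc e1 e2 ∩ f ⁻¹' {δ} with hVdef
    have hVc : IsClosed V := ContinuousOn.preimage_isClosed_of_isClosed
      (hc.mono (hsub12.trans hA)) isClosed_Icc isClosed_singleton
    have hVne : V.Nonempty := ⟨e2, ⟨hord, le_refl e2⟩, he2⟩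
    set v := sInf V with hvdef
    have hvV : v ∈ V := hVc.csInf_mem hVne ⟨e1, fun t ht => ht.1.1⟩
    have hfv : f v = δ := hvV.2
    set U : Set ℝ := Set.Icc e1 v ∩ f ⁻¹' {γ} with hUdef
    have hsubU : Set.Icc e1 v ⊆ Set.Icc α β := Set.Icc_subset_Icc he1A.1 (hvV.1.2.trans he2A.2)
    have hUc : IsClosed U := ContinuousOn.preimage_isClosed_of_isClosed
      (hc.mono (hsubU.trans hA)) isClosed_Icc isClosed_singleton
    have hUne : U.Nonempty := ⟨e1, ⟨le_refl e1, hvV.1.1⟩, he1⟩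
    set u := sSup U with hudef
    have huU : u ∈ U := hUc.csSup_mem hUne ⟨v, fun t ht => ht.1.2⟩
    have hfu : f u = γ := huU.2
    have huv : u < v := by
      rcases eq_or_lt_of_le huU.1.2 with h | h
      · exfalso; rw [h] at hfu; rw [hfu] at hfv; linarith
      · exact h
    have huA : u ∈ Set.Icc α β := hsubU huU.1
    have hvA : v ∈ Set.Icc α β := hsub12 hvV.1
    have hIuv : Set.Icc u v ⊆ Set.Icc α β := Set.Icc_subset_Icc huA.1 hvA.2
    have hcuv : ContinuousOn f (Set.Icc u v) := hc.mono (hIuv.trans hA)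
    have hmapB : ∀ t ∈ Set.Icc u v, f t ∈ Set.Icc γ δ := by
      intro t ht
      by_contra hcon
      rw [Set.mem_Icc, not_and_or, not_le, not_le] at hcon
      rcases hcon with h | h
      · -- f t < γ : find s ∈ [t, v] with f s = γ; contradicts u = sSup U
        obtain ⟨s, hs, hfs⟩ := intermediate_value_Icc ht.2
          (hc.mono ((Set.Icc_subset_Icc ht.1 (le_refl v)).trans (hIuv.trans hA)))
          (show γ ∈ Set.Icc (f t) (f v) from ⟨h.le, by rw [hfv]; linarith⟩)
        have hsU : s ∈ U := ⟨⟨huU.1.1.trans (ht.1.trans hs.1), hs.2⟩, hfs⟩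
        have hsu : s ≤ u := le_csSup ⟨v, fun t' ht' => ht'.1.2⟩ hsU
        have hst : s = t := le_antisymm (hsu.trans ht.1) hs.1
        rw [hst] at hfs; linarith [hfs, h]
      · -- δ < f t : find s ∈ [u, t] with f s = δ; contradicts v = sInf V
        obtain ⟨s, hs, hfs⟩ := intermediate_value_Icc ht.1
          (hc.mono ((Set.Icc_subset_Icc (le_refl u) ht.2).trans (hIuv.trans hA)))
          (show δ ∈ Set.Icc (f u) (f t) from ⟨by rw [hfu]; linarith, h.le⟩)
        have hsV : s ∈ V := ⟨⟨huU.1.1.trans hs.1, (hs.2.trans ht.2).trans hvV.1.2⟩, hfs⟩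
        have hvs : v ≤ s := csInf_le ⟨e1, fun t' ht' => ht'.1.1⟩ hsV
        have hst : s = t := le_antisymm hs.2 (ht.2.trans hvs)
        rw [hst] at hfs; linarith [hfs, h]
    obtain ⟨s1, hs1, hfs1⟩ := intermediate_value_Icc huv.le hcuv
      (show ra ∈ Set.Icc (f u) (f v) by rw [hfu, hfv]; exact hra)
    obtain ⟨s2, hs2, hfs2⟩ := intermediate_value_Icc huv.le hcuv
      (show rb ∈ Set.Icc (f u) (f v) by rw [hfu, hfv]; exact hrb)
    have hcff : ContinuousOn (fun t => f (f t) - t) (Set.Icc u v) := by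
      have h2 : Set.MapsTo f (Set.Icc u v) (Set.Icc a b) := fun t ht => hB (hmapB t ht)
      exact (hc.comp hcuv h2).sub continuousOn_id
    have hg1 : f (f s1) - s1 ≤ 0 := by
      rw [hfs1]
      have hα : α ≤ s1 := huA.1.trans hs1.1
      linarith [hfra]
    have hg2 : 0 ≤ f (f s2) - s2 := by
      rw [hfs2]
      have hβ : s2 ≤ β := hs2.2.trans hvA.2
      linarith [hfrb]
    have hsub_s : Set.uIcc s1 s2 ⊆ Set.Icc u v := Set.uIcc_subset_Icc hs1 hs2
    obtain ⟨y, hymem, hy0⟩ := intermediate_value_uIcc (hcff.mono hsub_s)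
      (show (0:ℝ) ∈ Set.uIcc (f (f s1) - s1) (f (f s2) - s2) by
        rw [Set.mem_uIcc]; left; exact ⟨hg1, hg2⟩)
    have hyuv : y ∈ Set.Icc u v := hsub_s hymem
    have hyab : y ∈ Set.Icc a b := hA (hIuv hyuv)
    have hffy : f (f y) = y := by
      have : f (f y) - y = 0 := hy0
      linarith
    refine ⟨y, hyab, hffy, ?_⟩
    have hfy : f y ∈ Set.Icc γ δ := hmapB y hyuv
    have hyβ : y ≤ β := (hIuv hyuv).2
    intro heq
    rw [heq] at hfy
    linarith [hfy.1]
  · -- e2 ≤ e1 : f e2 = δ , f e1 = γ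
    have hsub12 : Set.Icc e2 e1 ⊆ Set.Icc α β := Set.Icc_subset_Icc he2A.1 he1A.2
    set V : Set ℝ := Set.Icc e2 e1 ∩ f ⁻¹' {δ} with hVdef
    have hVc : IsClosed V := ContinuousOn.preimage_isClosed_of_isClosed
      (hc.mono (hsub12.trans hA)) isClosed_Icc isClosed_singleton
    have hVne : V.Nonempty := ⟨e2, ⟨le_refl e2, hord⟩, he2⟩
    set v := sSup V with hvdef
    have hvV : v ∈ V := hVc.csSup_mem hVne ⟨e1, fun t ht => ht.1.2⟩
    have hfv : f v = δ := hvV.2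
    set U : Set ℝ := Set.Icc v e1 ∩ f ⁻¹' {γ} with hUdef
    have hsubU : Set.Icc v e1 ⊆ Set.Icc α β := Set.Icc_subset_Icc (he2A.1.trans hvV.1.1) he1A.2
    have hUc : IsClosed U := ContinuousOn.preimage_isClosed_of_isClosed
      (hc.mono (hsubU.trans hA)) isClosed_Icc isClosed_singleton
    have hUne : U.Nonempty := ⟨e1, ⟨hvV.1.2, le_refl e1⟩, he1⟩
    set u := sInf U with hudef
    have huU : u ∈ U := hUc.csInf_mem hUne ⟨v, fun t ht => ht.1.1⟩
    have hfu : f u = γ := huU.2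
    have hvu : v < u := by
      rcases eq_or_lt_of_le huU.1.1 with h | h
      · exfalso; rw [← h] at hfu; rw [hfu] at hfv; linarith
      · exact h
    have huA : u ∈ Set.Icc α β := hsubU huU.1
    have hvA : v ∈ Set.Icc α β := hsub12 hvV.1
    have hIvu : Set.Icc v u ⊆ Set.Icc α β := Set.Icc_subset_Icc hvA.1 huA.2
    have hcvu : ContinuousOn f (Set.Icc v u) := hc.mono (hIvu.trans hA)
    have hmapB : ∀ t ∈ Set.Icc v u, f t ∈ Set.Icc γ δ := by
      intro t ht
      by_contra hcon
      rw [Set.mem_Icc, not_and_or, not_le, not_le] at hcon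
      rcases hcon with h | h
      · -- f t < γ : find s ∈ [v, t] with f s = γ; contradicts u = sInf U
        obtain ⟨s, hs, hfs⟩ := intermediate_value_Icc' ht.1
          (hc.mono ((Set.Icc_subset_Icc (le_refl v) ht.2).trans (hIvu.trans hA)))
          (show γ ∈ Set.Icc (f t) (f v) from ⟨h.le, by rw [hfv]; linarith⟩)
        have hsU : s ∈ U := ⟨⟨hs.1, (hs.2.trans ht.2).trans huU.1.2⟩, hfs⟩
        have hus : u ≤ s := csInf_le ⟨v, fun t' ht' => ht'.1.1⟩ hsU
        have hst : s = t := le_antisymm hs.2 (ht.2.trans hus)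
        rw [hst] at hfs; linarith [hfs, h]
      · -- δ < f t : find s ∈ [t, u] with f s = δ; contradicts v = sSup V
        obtain ⟨s, hs, hfs⟩ := intermediate_value_Icc' ht.2
          (hc.mono ((Set.Icc_subset_Icc ht.1 (le_refl u)).trans (hIvu.trans hA)))
          (show δ ∈ Set.Icc (f u) (f t) from ⟨by rw [hfu]; linarith, h.le⟩)
        have hsV : s ∈ V := ⟨⟨hvV.1.1.trans (ht.1.trans hs.1), hs.2.trans huU.1.2⟩, hfs⟩
        have hsv : s ≤ v := le_csSup ⟨e1, fun t' ht' => ht'.1.2⟩ hsV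
        have hst : s = t := le_antisymm (hsv.trans ht.1) hs.1
        rw [hst] at hfs; linarith [hfs, h]
    obtain ⟨s1, hs1, hfs1⟩ := intermediate_value_Icc' hvu.le hcvu
      (show ra ∈ Set.Icc (f u) (f v) by rw [hfu, hfv]; exact hra)
    obtain ⟨s2, hs2, hfs2⟩ := intermediate_value_Icc' hvu.le hcvu
      (show rb ∈ Set.Icc (f u) (f v) by rw [hfu, hfv]; exact hrb)
    have hcff : ContinuousOn (fun t => f (f t) - t) (Set.Icc v u) := by
      have h2 : Set.MapsTo f (Set.Icc v u) (Set.Icc a b) := fun t ht => hB (hmapB t ht)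
      exact (hc.comp hcvu h2).sub continuousOn_id
    have hg1 : f (f s1) - s1 ≤ 0 := by
      rw [hfs1]
      have hα : α ≤ s1 := hvA.1.trans hs1.1
      linarith [hfra]
    have hg2 : 0 ≤ f (f s2) - s2 := by
      rw [hfs2]
      have hβ : s2 ≤ β := hs2.2.trans huA.2
      linarith [hfrb]
    have hsub_s : Set.uIcc s1 s2 ⊆ Set.Icc v u := Set.uIcc_subset_Icc hs1 hs2
    obtain ⟨y, hymem, hy0⟩ := intermediate_value_uIcc (hcff.mono hsub_s)
      (show (0:ℝ) ∈ Set.uIcc (f (f s1) - s1) (f (f s2) - s2) by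
        rw [Set.mem_uIcc]; left; exact ⟨hg1, hg2⟩)
    have hyvu : y ∈ Set.Icc v u := hsub_s hymem
    have hyab : y ∈ Set.Icc a b := hA (hIvu hyvu)
    have hffy : f (f y) = y := by
      have : f (f y) - y = 0 := hy0
      linarith
    refine ⟨y, hyab, hffy, ?_⟩
    have hfy : f y ∈ Set.Icc γ δ := hmapB y hyvu
    have hyβ : y ≤ β := (hIvu hyvu).2
    intro heq
    rw [heq] at hfy
    linarith [hfy.1]

theorem period_gt_two_implies_period_two (a b : ℝ) (hab : a ≤ b) (f : ℝ → ℝ)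
    (hc : ContinuousOn f (Set.Icc a b))
    (hmaps : Set.MapsTo f (Set.Icc a b) (Set.Icc a b))
    (m : ℕ) (hm : 2 < m) (x : ℝ) (hx : x ∈ Set.Icc a b)
    (hper : f^[m] x = x ∧ ∀ k, 0 < k → k < m → f^[k] x ≠ x) :
    ∃ y ∈ Set.Icc a b, f^[2] y = y ∧ f y ≠ y := by
  obtain ⟨hpm, hlp⟩ := hper
  by_contra hcon
  push_neg at hcon
  have no2 : ∀ y ∈ Set.Icc a b, f (f y) = y → f y = y := by
    intro y hy hyy
    by_contra hne
    have h2 : f^[2] y = y := by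
      rw [show (2:ℕ) = 1 + 1 from rfl, Function.iterate_add_apply]
      simpa using hyy
    exact hne (hcon y hy h2)
  have hm0 : 0 < m := by omega
  -- basic orbit facts
  have hxiter : ∀ k : ℕ, f^[k] x ∈ Set.Icc a b := by
    intro k
    induction k with
    | zero => simpa using hx
    | succ j ih => rw [Function.iterate_succ_apply']; exact hmaps ih
  have key : ∀ j k : ℕ, 0 < j → j < m → k < m → f^[k + j] x = f^[k] x → False := by
    intro j k hj hjm hkm heq
    have h1 : f^[m - k] (f^[k + j] x) = f^[m - k] (f^[k] x) := by rw [heq]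
    rw [← Function.iterate_add_apply, ← Function.iterate_add_apply] at h1
    have e1 : m - k + (k + j) = j + m := by omega
    have e2 : m - k + k = m := by omega
    rw [e1, e2, hpm] at h1
    rw [Function.iterate_add_apply, hpm] at h1
    exact hlp j hj hjm h1
  -- orbit as a finset
  set O : Finset ℝ := (Finset.range m).image (fun k => f^[k] x) with hO
  have hmemO : ∀ t, t ∈ O ↔ ∃ k, k < m ∧ f^[k] x = t := by
    intro t
    simp only [hO, Finset.mem_image, Finset.mem_range]
  have hOne : O.Nonempty := ⟨x, (hmemO x).mpr ⟨0, hm0, rfl⟩⟩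
  have hOI : ∀ t ∈ O, t ∈ Set.Icc a b := by
    intro t ht
    obtain ⟨k, _, he⟩ := (hmemO t).mp ht
    rw [← he]; exact hxiter k
  have hfO : ∀ t ∈ O, f t ∈ O := by
    intro t ht
    obtain ⟨k, hk, he⟩ := (hmemO t).mp ht
    have hstep : f t = f^[k+1] x := by rw [← he, Function.iterate_succ_apply']
    by_cases h : k + 1 = m
    · rw [hstep, h, hpm]; exact (hmemO x).mpr ⟨0, hm0, rfl⟩
    · rw [hstep]; exact (hmemO _).mpr ⟨k + 1, by omega, rfl⟩
  have hperO : ∀ t ∈ O, f^[m] t = t := by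
    intro t ht
    obtain ⟨k, _, he⟩ := (hmemO t).mp ht
    rw [← he, ← Function.iterate_add_apply f m k x, Nat.add_comm m k,
      Function.iterate_add_apply, hpm]
  have hne1 : ∀ t ∈ O, f t ≠ t := by
    intro t ht heq
    obtain ⟨k, hk, he⟩ := (hmemO t).mp ht
    apply key 1 k (by omega) (by omega) hk
    rw [Nat.add_comm k 1, Function.iterate_add_apply, he]
    simpa using heq
  have hne2 : ∀ t ∈ O, f (f t) ≠ t := by
    intro t ht heq
    obtain ⟨k, hk, he⟩ := (hmemO t).mp ht
    apply key 2 k (by omega) (by omega) hk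
    rw [Nat.add_comm k 2, Function.iterate_add_apply, he]
    rw [show (2:ℕ) = 1 + 1 from rfl, Function.iterate_add_apply]
    simpa using heq
  have hsur : ∀ t ∈ O, ∃ s ∈ O, f s = t := by
    intro t ht
    obtain ⟨k, hk, he⟩ := (hmemO t).mp ht
    rcases Nat.eq_zero_or_pos k with h0 | h0
    · refine ⟨f^[m-1] x, (hmemO _).mpr ⟨m-1, by omega, rfl⟩, ?_⟩
      have h1 : f (f^[m-1] x) = f^[m] x := by
        conv_rhs => rw [show m = (m-1)+1 by omega]
        rw [Function.iterate_succ_apply']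
      rw [h1, hpm]
      rw [h0] at he
      simpa using he
    · refine ⟨f^[k-1] x, (hmemO _).mpr ⟨k-1, by omega, rfl⟩, ?_⟩
      have h1 : f (f^[k-1] x) = f^[k] x := by
        conv_rhs => rw [show k = (k-1)+1 by omega]
        rw [Function.iterate_succ_apply']
      rw [h1, he]
  -- the sign condition C on the orbit
  have hC : ∀ t ∈ O, (t < f t → t < f (f t)) ∧ (f t < t → f (f t) < t) := by
    intro t ht
    have htI := hOI t ht
    have htper := hperO t ht
    constructor
    · intro h1
      rcases lt_trichotomy t (f (f t)) with h | h | h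
      · exact h
      · exact absurd h.symm (hne2 t ht)
      · exact absurd (stepA a b f hc hmaps no2 t htI m hm0 htper h1 h) id
    · intro h1
      rcases lt_trichotomy (f (f t)) t with h | h | h
      · exact h
      · exact absurd h (hne2 t ht)
      · exact absurd (stepA' a b f hc hmaps no2 t htI m hm0 htper h1 h) id
  -- d : the smallest orbit point with f d < d
  have hMdown : ∃ t ∈ O, f t < t := by
    refine ⟨O.max' hOne, O.max'_mem hOne, ?_⟩
    have hmem := hfO _ (O.max'_mem hOne)
    have hle : f (O.max' hOne) ≤ O.max' hOne := O.le_max' _ hmem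
    rcases eq_or_lt_of_le hle with h | h
    · exact absurd h (hne1 _ (O.max'_mem hOne))
    · exact h
  set Down : Finset ℝ := O.filter (fun t => f t < t) with hDown
  have hDne : Down.Nonempty := by
    obtain ⟨t, ht, hft⟩ := hMdown
    exact ⟨t, Finset.mem_filter.mpr ⟨ht, hft⟩⟩
  set d := Down.min' hDne with hd
  have hdDown : d ∈ Down := Down.min'_mem hDne
  have hdO : d ∈ O := (Finset.mem_filter.mp hdDown).1
  have hfd_lt : f d < d := (Finset.mem_filter.mp hdDown).2
  have hupO : ∀ t ∈ O, t < d → t < f t := by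
    intro t ht htd
    have hnd : t ∉ Down := fun hmem => absurd (Down.min'_le t hmem) (not_le.mpr htd)
    have : ¬ (f t < t) := fun h => hnd (Finset.mem_filter.mpr ⟨ht, h⟩)
    rcases lt_trichotomy t (f t) with h | h | h
    · exact h
    · exact absurd h.symm (hne1 t ht)
    · exact absurd h this
  -- c : the largest orbit point below d
  set Lz : Finset ℝ := O.filter (fun t => t < d) with hLz
  have hLzne : Lz.Nonempty := by
    refine ⟨O.min' hOne, Finset.mem_filter.mpr ⟨O.min'_mem hOne, ?_⟩⟩
    have h1 : O.min' hOne ≤ d := O.min'_le d hdO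
    rcases eq_or_lt_of_le h1 with h | h
    · exfalso
      have := O.min'_le (f d) (hfO d hdO)
      rw [h] at this
      linarith
    · exact h
  set c := Lz.max' hLzne with hcdef
  have hcLz : c ∈ Lz := Lz.max'_mem hLzne
  have hcO : c ∈ O := (Finset.mem_filter.mp hcLz).1
  have hcd : c < d := (Finset.mem_filter.mp hcLz).2
  have hadj : ∀ t ∈ O, t < d → t ≤ c := by
    intro t ht htd
    exact Lz.le_max' t (Finset.mem_filter.mpr ⟨ht, htd⟩)
  have hcup : c < f c := hupO c hcO hcd
  have hfdO : f d ∈ O := hfO d hdO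
  have hfd_le_c : f d ≤ c := hadj (f d) hfdO hfd_lt
  have hfc_ge_d : d ≤ f c := by
    by_contra h
    push_neg at h
    have := hadj (f c) (hfO c hcO) h
    linarith
  have hffd : f (f d) < d := (hC d hdO).2 hfd_lt
  have hffc : c < f (f c) := (hC c hcO).1 hcup
  -- e : the max of f over orbit points in [f d, c]
  set Az : Finset ℝ := O.filter (fun t => f d ≤ t ∧ t ≤ c) with hAz
  have hAzne : Az.Nonempty := ⟨f d, Finset.mem_filter.mpr ⟨hfdO, le_refl _, hfd_le_c⟩⟩
  set E : Finset ℝ := Az.image f with hE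
  have hEne : E.Nonempty := hAzne.image f
  set e := E.max' hEne with hedef
  obtain ⟨lb, hlbAz, hlbe⟩ := Finset.mem_image.mp (E.max'_mem hEne)
  have hlbO : lb ∈ O := (Finset.mem_filter.mp hlbAz).1
  have hlbmem : f d ≤ lb ∧ lb ≤ c := (Finset.mem_filter.mp hlbAz).2
  have hcAz : c ∈ Az := Finset.mem_filter.mpr ⟨hcO, hfd_le_c, le_refl c⟩
  have hfc_le_e : f c ≤ e := E.le_max' (f c) (Finset.mem_image.mpr ⟨c, hcAz, rfl⟩)
  have hde : d ≤ e := hfc_ge_d.trans hfc_le_e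
  have hd_lt_e : d < e := by
    rcases eq_or_lt_of_le hde with h | h
    · exfalso
      have h1 : f c = d := le_antisymm (by rw [h]; exact hfc_le_e) hfc_ge_d
      rw [h1] at hffc
      linarith [hfd_le_c]
    · exact h
  have heO : e ∈ O := by
    rw [hedef, ← hlbe]; exact hfO lb hlbO
  -- apply the covering lemma with A = [f d, c] , B = [d, e]
  have hfdI := hOI (f d) hfdO
  have hcI := hOI c hcO
  have hdI := hOI d hdO
  have heI := hOI e heO
  obtain ⟨y, hyI, hffy, hfyne⟩ :=
    covering a b f hc (f d) c d e hfdI.1 hfd_le_c hcd hd_lt_e heI.2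
      (f d) lb d (f c)
      ⟨le_refl _, hfd_le_c⟩ ⟨hlbmem.1, hlbmem.2⟩ ⟨le_refl _, hde⟩ ⟨hfc_ge_d, hfc_le_e⟩
      hffd.le (le_of_eq hlbe.symm) (le_refl (f d)) hffc.le
  apply hfyne
  apply no2 y hyI hffy
end

section
/- If a continuous map f : I → I of a closed bounded interval into itself has a periodic point of least period 2^l for some l ≥ 0, then for every i with 0 ≤ i < l, f has a periodic point of least period 2^i. -/
/-! For `i = 0` this is the fixed-point theorem on `[a, b]`. For `i ≥ 1`, apply "a non-fixed
periodic point forces a point of least period 2" to `g = f^[2^(i-1)]`: the point `x` is periodic but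
not fixed for `g`, and a point of least period 2 for `g` has least period `2^i` for `f`.

A non-fixed periodic orbit contains `p < q` with `q ≤ f p` and `f q ≤ p`, and the intermediate
value theorem on `[p, q]` then gives a point `y < f y` with `f (f y) ≤ y`. For such `y`, the largest
`u ≤ y` with `u ≤ f (f u)` is a fixed point of `f ∘ f`. It is not a fixed point of `f`: otherwise
`f` moves every point of `(u, y]` up while `f ∘ f` moves it down, which is impossible for a point
`t` near `u` with `f t` still in `(u, y]`. -/

open Set Function

theorem Function.minimalPeriod_eq_prime_pow_succ_of_minimalPeriod_iterate {α : Type*}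
    {f : α → α} {x : α} {p k : ℕ} [Fact p.Prime] (h : minimalPeriod (f^[p ^ k]) x = p) :
    minimalPeriod f x = p ^ (k + 1) := by
  obtain ⟨hper, hfix⟩ := minimalPeriod_eq_prime_iff.1 h
  refine minimalPeriod_eq_prime_pow hfix ?_
  rw [pow_succ, IsPeriodicPt, iterate_mul]
  exact hper

theorem Finset.exists_lt_le_apply_and_apply_le {α : Type*} [LinearOrder α] {s : Finset α}
    {f : α → α} (hs : s.Nonempty) (hmaps : MapsTo f s s) (hfix : ∀ t ∈ s, f t ≠ t) :
    ∃ p ∈ s, ∃ q ∈ s, p < q ∧ q ≤ f p ∧ f q ≤ p := by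
  classical
  have hP : (s.filter fun t => t < f t).Nonempty := by
    have hmin := s.min'_mem hs
    exact ⟨_, mem_filter.2 ⟨hmin, (s.min'_le _ (hmaps hmin)).lt_of_ne (hfix _ hmin).symm⟩⟩
  set p := (s.filter fun t => t < f t).max' hP
  obtain ⟨hp, hpf⟩ := mem_filter.1 ((s.filter fun t => t < f t).max'_mem hP)
  have hfp : f p ∈ s.filter (p < ·) := mem_filter.2 ⟨hmaps hp, hpf⟩
  set q := (s.filter (p < ·)).min' ⟨_, hfp⟩
  obtain ⟨hq, hpq⟩ := mem_filter.1 ((s.filter (p < ·)).min'_mem ⟨_, hfp⟩)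
  have hfq : f q < q := (hfix q hq).lt_or_gt.resolve_right fun h =>
    hpq.not_ge (le_max' _ q (mem_filter.2 ⟨hq, h⟩))
  refine ⟨p, hp, q, hq, hpq, min'_le _ _ hfp, not_lt.1 fun h => ?_⟩
  exact hfq.not_ge (min'_le _ _ (mem_filter.2 ⟨hmaps hq, h⟩))

section Icc

variable {a b : ℝ} {f : ℝ → ℝ}

theorem exists_lt_apply_and_apply_apply_le_of_isPeriodicPt (hc : ContinuousOn f (Icc a b))
    (hm : MapsTo f (Icc a b) (Icc a b)) {x : ℝ} (hx : x ∈ Icc a b) {n : ℕ} (hn : 0 < n)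
    (hper : IsPeriodicPt f n x) (hfx : ¬IsFixedPt f x) :
    ∃ y ∈ Icc a b, y < f y ∧ f (f y) ≤ y := by
  classical
  set O := (Finset.range n).image (f^[·] x)
  have hO : ∀ t ∈ O, ∃ k, f^[k] x = t := fun t ht => by
    obtain ⟨k, -, hk⟩ := Finset.mem_image.1 ht
    exact ⟨k, hk⟩
  have hOmaps : MapsTo f O O := fun t ht => by
    obtain ⟨k, rfl⟩ := hO t ht
    rw [← iterate_succ_apply' f k, ← hper.iterate_mod_apply]
    exact Finset.mem_image_of_mem _ (Finset.mem_range.2 (Nat.mod_lt _ hn))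
  have hOfix : ∀ t ∈ O, f t ≠ t := fun t ht hfix => by
    obtain ⟨k, rfl⟩ := hO t ht
    refine hfx (minimalPeriod_eq_one_iff_isFixedPt.1 ?_)
    rw [← minimalPeriod_apply_iterate (mk_mem_periodicPts hn hper) k]
    exact minimalPeriod_eq_one_iff_isFixedPt.2 hfix
  have hOsub : ∀ t ∈ O, t ∈ Icc a b := fun t ht => by
    obtain ⟨k, rfl⟩ := hO t ht
    exact hm.iterate k hx
  obtain ⟨p, hp, q, hq, hpq, hqfp, hfqp⟩ := Finset.exists_lt_le_apply_and_apply_le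
    ⟨x, Finset.mem_image_of_mem _ (Finset.mem_range.2 hn)⟩ hOmaps hOfix
  have hsub : Icc p q ⊆ Icc a b := Icc_subset_Icc (hOsub p hp).1 (hOsub q hq).2
  obtain ⟨y, hy, hfy⟩ := intermediate_value_Icc' hpq.le (hc.mono hsub)
    ⟨(hfqp.trans_lt hpq).le, hqfp⟩
  refine ⟨y, hsub hy, hfy ▸ hy.2.lt_of_ne fun hyq => ?_, hfy ▸ hfqp.trans hy.1⟩
  subst hyq
  exact (hfqp.trans_lt hpq).ne hfy

theorem exists_mem_Ioc_lt_apply_apply_of_isFixedPt {u y : ℝ} (hc : ContinuousOn f (Icc u y))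
    (huy : u < y) (hfix : IsFixedPt f u) (hup : ∀ t ∈ Ioc u y, t < f t) :
    ∃ t ∈ Ioc u y, t < f (f t) := by
  have hv : (u + y) / 2 ∈ Ioc u y := ⟨by linarith, by linarith⟩
  obtain ⟨t, ht, hft⟩ := intermediate_value_Icc huy.le hc
    ⟨hfix.le.trans hv.1.le, hv.2.trans (hup y ⟨huy, le_rfl⟩).le⟩
  have hut : u < t := ht.1.lt_of_ne (by rintro rfl; exact hv.1.ne (hfix.symm.trans hft))
  refine ⟨t, ⟨hut, ht.2⟩, ?_⟩
  calc t < f t := hup t ⟨hut, ht.2⟩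
    _ < f (f t) := by rw [hft]; exact hup _ hv

theorem exists_minimalPeriod_eq_two_of_lt_apply_of_apply_apply_le
    (hc : ContinuousOn f (Icc a b)) (hm : MapsTo f (Icc a b) (Icc a b)) {y : ℝ}
    (hy : y ∈ Icc a b) (hup : y < f y) (hdown : f (f y) ≤ y) :
    ∃ w ∈ Icc a b, minimalPeriod f w = 2 := by
  suffices ∃ w ∈ Icc a b, IsPeriodicPt f 2 w ∧ ¬IsFixedPt f w from
    this.imp fun w ⟨hw, h⟩ => ⟨hw, minimalPeriod_eq_prime_iff.2 h⟩
  rcases hdown.eq_or_lt with hdown | hdown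
  · exact ⟨y, hy, hdown, hup.ne'⟩
  have hay : Icc a y ⊆ Icc a b := Icc_subset_Icc_right hy.2
  have hc2 : ContinuousOn (f^[2]) (Icc a y) := (hc.iterate hm 2).mono hay
  obtain ⟨u, ⟨⟨hau, huy⟩, hu⟩, humax⟩ : ∃ u, IsGreatest {t ∈ Icc a y | t ≤ f^[2] t} u :=
    (isCompact_Icc.of_isClosed_subset (isClosed_Icc.isClosed_le continuousOn_id hc2)
      (sep_subset _ _)).exists_isGreatest
      ⟨a, ⟨le_rfl, hy.1⟩, (hm.iterate 2 ⟨le_rfl, hy.1.trans hy.2⟩).1⟩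
  have huy : u < y := huy.lt_of_ne (by rintro rfl; exact hdown.not_ge hu)
  have huI : Icc u y ⊆ Icc a b := hay.trans' (Icc_subset_Icc_left hau)
  have hmoves_down : ∀ t ∈ Ioc u y, f^[2] t < t := fun t ht => not_le.1 fun h =>
    ht.1.not_ge (humax ⟨⟨hau.trans ht.1.le, ht.2⟩, h⟩)
  have huper : IsPeriodicPt f 2 u := by
    obtain ⟨c, hcm, hcfix⟩ := exists_mem_Icc_isFixedPt (hc2.mono (Icc_subset_Icc_left hau))
      huy.le hu hdown.le
    obtain rfl : c = u := le_antisymm (humax ⟨⟨hau.trans hcm.1, hcm.2⟩, hcfix.ge⟩) hcm.1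
    exact hcfix
  refine ⟨u, huI ⟨le_rfl, huy.le⟩, huper, fun hufix => ?_⟩
  have hmoves_up : ∀ t ∈ Ioc u y, t < f t := fun t ht => not_le.1 fun h => by
    have hsub : Icc t y ⊆ Icc a b := (Icc_subset_Icc_left ht.1.le).trans huI
    obtain ⟨c, hcm, hcfix⟩ := exists_mem_uIcc_isFixedPt (hc.mono (uIcc_of_ge ht.2 ▸ hsub)) hup.le h
    rw [uIcc_of_ge ht.2] at hcm
    exact (hmoves_down c ⟨ht.1.trans_le hcm.1, hcm.2⟩).ne (hcfix.iterate 2)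
  obtain ⟨t, ht, hft⟩ := exists_mem_Ioc_lt_apply_apply_of_isFixedPt (hc.mono huI) huy hufix
    hmoves_up
  exact (hmoves_down t ht).not_gt hft

theorem exists_minimalPeriod_eq_two_of_isPeriodicPt (hc : ContinuousOn f (Icc a b))
    (hm : MapsTo f (Icc a b) (Icc a b)) {x : ℝ} (hx : x ∈ Icc a b) {n : ℕ} (hn : 0 < n)
    (hper : IsPeriodicPt f n x) (hfx : ¬IsFixedPt f x) :
    ∃ w ∈ Icc a b, minimalPeriod f w = 2 :=
  let ⟨_, hy, hup, hdown⟩ := exists_lt_apply_and_apply_apply_le_of_isPeriodicPt hc hm hx hn hper hfx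
  exists_minimalPeriod_eq_two_of_lt_apply_of_apply_apply_le hc hm hy hup hdown

end Icc

theorem period_pow_two_implies_smaller_pow_two (a b : ℝ) (hab : a ≤ b) (f : ℝ → ℝ)
    (hc : ContinuousOn f (Set.Icc a b))
    (hmaps : Set.MapsTo f (Set.Icc a b) (Set.Icc a b))
    (l : ℕ) (x : ℝ) (hx : x ∈ Set.Icc a b)
    (hper : f^[2 ^ l] x = x ∧ ∀ k, 0 < k → k < 2 ^ l → f^[k] x ≠ x)
    (i : ℕ) (hi : i < l) :
    ∃ y ∈ Set.Icc a b, f^[2 ^ i] y = y ∧ ∀ k, 0 < k → k < 2 ^ i → f^[k] y ≠ y := by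
  obtain ⟨y, hy, hyper⟩ : ∃ y ∈ Icc a b, minimalPeriod f y = 2 ^ i := by
    cases i with
    | zero =>
      obtain ⟨y, hy, hfix⟩ := exists_mem_Icc_isFixedPt_of_mapsTo hc hab hmaps
      exact ⟨y, hy, minimalPeriod_eq_one_iff_isFixedPt.2 hfix⟩
    | succ j =>
      have hxper : IsPeriodicPt (f^[2 ^ j]) (2 ^ l) x := IsPeriodicPt.iterate hper.1 _
      have hxfix : ¬IsFixedPt (f^[2 ^ j]) x :=
        hper.2 _ (by positivity) (Nat.pow_lt_pow_right (by norm_num) (by omega))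
      obtain ⟨y, hy, hy2⟩ := exists_minimalPeriod_eq_two_of_isPeriodicPt
        (hc.iterate hmaps _) (hmaps.iterate _) hx (by positivity) hxper hxfix
      exact ⟨y, hy, minimalPeriod_eq_prime_pow_succ_of_minimalPeriod_iterate hy2⟩
  exact ⟨y, hy, hyper ▸ iterate_minimalPeriod,
    fun k hk hlt => not_isPeriodicPt_of_pos_of_lt_minimalPeriod hk.ne' (hyper ▸ hlt)⟩
end

section
/- If a continuous map f : I → I of a closed bounded interval into itself has a periodic point whose least period is not a power of 2, then for every nonnegative integer i, f has a periodic point of least period 2^i. -/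
open Set Function

lemma cover_incr (g : ℝ → ℝ) (u v c d : ℝ) (huv : u ≤ v) (hcd : c ≤ d)
    (hg : ContinuousOn g (Icc u v)) (hu : g u ≤ c) (hv : d ≤ g v) :
    ∃ s t, u ≤ s ∧ s ≤ t ∧ t ≤ v ∧ g s = c ∧ g t = d ∧ ∀ w ∈ Icc s t, g w ∈ Icc c d := by
  set T : Set ℝ := Icc u v ∩ g ⁻¹' {d} with hT
  have hTcl : IsClosed T := hg.preimage_isClosed_of_isClosed isClosed_Icc isClosed_singleton
  have hTne : T.Nonempty := by
    obtain ⟨w, hw, hgw⟩ := intermediate_value_Icc huv hg ⟨hu.trans hcd, hv⟩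
    exact ⟨w, hw, by simp [hgw]⟩
  have hTbdd : BddBelow T := ⟨u, fun w hw => hw.1.1⟩
  set t := sInf T with htdef
  have htT : t ∈ T := hTcl.csInf_mem hTne hTbdd
  have hut : u ≤ t := htT.1.1
  have htv : t ≤ v := htT.1.2
  have hgt : g t = d := htT.2
  set S : Set ℝ := Icc u t ∩ g ⁻¹' {c} with hS
  have hScl : IsClosed S :=
    (hg.mono (Icc_subset_Icc le_rfl htv)).preimage_isClosed_of_isClosed isClosed_Icc
      isClosed_singleton
  have hSne : S.Nonempty := by
    obtain ⟨w, hw, hgw⟩ := intermediate_value_Icc hut (hg.mono (Icc_subset_Icc le_rfl htv))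
      ⟨hu, by rw [hgt]; exact hcd⟩
    exact ⟨w, hw, by simp [hgw]⟩
  have hSbdd : BddAbove S := ⟨t, fun w hw => hw.1.2⟩
  set s := sSup S with hsdef
  have hsS : s ∈ S := hScl.csSup_mem hSne hSbdd
  have hus : u ≤ s := hsS.1.1
  have hst : s ≤ t := hsS.1.2
  have hgs : g s = c := hsS.2
  refine ⟨s, t, hus, hst, htv, hgs, hgt, ?_⟩
  intro w hw
  have hwuv : w ∈ Icc u v := ⟨hus.trans hw.1, hw.2.trans htv⟩
  constructor
  · by_contra hlt
    push_neg at hlt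
    -- g w < c : find w' ∈ [w,t] with g w' = c, contradicting sSup
    obtain ⟨w', hw', hgw'⟩ := intermediate_value_Icc hw.2
      (hg.mono (Icc_subset_Icc hwuv.1 htv)) ⟨hlt.le, by rw [hgt]; exact hcd⟩
    have : w' ≤ s := le_csSup hSbdd ⟨⟨hwuv.1.trans hw'.1, hw'.2⟩, by simp [hgw']⟩
    have hws : w = s := le_antisymm (this.trans' hw'.1 |>.trans (le_refl s)) hw.1
    rw [hws, hgs] at hlt; exact lt_irrefl c hlt
  · by_contra hlt
    push_neg at hlt
    -- d < g w : find w' ∈ [s,w] with g w' = d, contradicting sInf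
    obtain ⟨w', hw', hgw'⟩ := intermediate_value_Icc hw.1
      (hg.mono (Icc_subset_Icc (hus.trans' le_rfl) (hw.2.trans htv))) ⟨by rw [hgs]; exact hcd, hlt.le⟩
    have : t ≤ w' := csInf_le hTbdd ⟨⟨hus.trans hw'.1, (hw'.2.trans hw.2).trans htv⟩, by simp [hgw']⟩
    have hwt : w = t := le_antisymm hw.2 (this.trans hw'.2)
    rw [hwt, hgt] at hlt; exact lt_irrefl d hlt

lemma cover_decr (g : ℝ → ℝ) (u v c d : ℝ) (huv : u ≤ v) (hcd : c ≤ d)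
    (hg : ContinuousOn g (Icc u v)) (hu : d ≤ g u) (hv : g v ≤ c) :
    ∃ s t, u ≤ s ∧ s ≤ t ∧ t ≤ v ∧ g s = d ∧ g t = c ∧ ∀ w ∈ Icc s t, g w ∈ Icc c d := by
  -- reflect: h w := g (u + v - w) on [u, v]
  set r : ℝ → ℝ := fun w => u + v - w with hr
  have hrmaps : ∀ w ∈ Icc u v, r w ∈ Icc u v := by
    intro w hw; constructor <;> simp [hr] <;> linarith [hw.1, hw.2]
  have hrc : Continuous r := by continuity
  have hgc : ContinuousOn (g ∘ r) (Icc u v) :=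
    hg.comp hrc.continuousOn (fun w hw => hrmaps w hw)
  have h1 : (g ∘ r) u ≤ c := by simp [hr]; simpa using hv
  have h2 : d ≤ (g ∘ r) v := by simp [hr]; simpa using hu
  obtain ⟨s', t', hus', hst', htv', hgs', hgt', hall⟩ :=
    cover_incr (g ∘ r) u v c d huv hcd hgc h1 h2
  refine ⟨r t', r s', ?_, ?_, ?_, ?_, ?_, ?_⟩
  · simp [hr]; try linarith
  · simp [hr]; try linarith
  · simp [hr]; try linarith
  · simpa using hgt'
  · simpa using hgs'
  · intro w hw
    have : w = r (r w) := by simp [hr]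
    rw [this]
    have hw1 : u + v - t' ≤ w := by simpa [hr] using hw.1
    have hw2 : w ≤ u + v - s' := by simpa [hr] using hw.2
    have hrw : r w ∈ Icc s' t' := by
      constructor <;> simp [hr] <;> linarith
    exact hall _ hrw

/-- Combined cover: from unordered certificate points `s₀` (mapping `≤ c`) and
`t₀` (mapping `≥ d`) inside `[α, β]`, find a subinterval of the hull of `s₀,t₀` mapping
exactly onto (into) `[c,d]` with endpoints hitting `c` and `d`. -/
lemma cover_pair (g : ℝ → ℝ) (α β : ℝ) (hg : ContinuousOn g (Icc α β))
    (s₀ t₀ c d : ℝ) (hs₀ : s₀ ∈ Icc α β) (ht₀ : t₀ ∈ Icc α β) (hcd : c ≤ d)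
    (h1 : g s₀ ≤ c) (h2 : d ≤ g t₀) :
    ∃ k₁ k₂, k₁ ≤ k₂ ∧ min s₀ t₀ ≤ k₁ ∧ k₂ ≤ max s₀ t₀ ∧
      ((g k₁ = c ∧ g k₂ = d) ∨ (g k₁ = d ∧ g k₂ = c)) ∧ ∀ w ∈ Icc k₁ k₂, g w ∈ Icc c d := by
  rcases le_total s₀ t₀ with hle | hle
  · obtain ⟨k₁, k₂, h₁, h₂, h₃, h₄, h₅, h₆⟩ :=
      cover_incr g s₀ t₀ c d hle hcd (hg.mono (Icc_subset_Icc hs₀.1 ht₀.2)) h1 h2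
    exact ⟨k₁, k₂, h₂, by simpa [min_eq_left hle] using h₁,
      by simpa [max_eq_right hle] using h₃, Or.inl ⟨h₄, h₅⟩, h₆⟩
  · obtain ⟨k₁, k₂, h₁, h₂, h₃, h₄, h₅, h₆⟩ :=
      cover_decr g t₀ s₀ c d hle hcd (hg.mono (Icc_subset_Icc ht₀.1 hs₀.2)) h2 h1
    exact ⟨k₁, k₂, h₂, by simpa [min_eq_right hle] using h₁,
      by simpa [max_eq_left hle] using h₃, Or.inr ⟨h₄, h₅⟩, h₆⟩

/-- The two-interval loop lemma: intervals `A = [x₁,x₂]`, `B = [y₁,y₂]` with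
certified mutual covering produce a point of period exactly 2. -/
lemma two_loop (a b : ℝ) (g : ℝ → ℝ) (hg : ContinuousOn g (Icc a b))
    (x₁ x₂ y₁ y₂ : ℝ) (h12 : x₁ ≤ x₂) (h23 : x₂ ≤ y₁) (h34 : y₁ ≤ y₂)
    (hx₁ : x₁ ∈ Icc a b) (hy₂ : y₂ ∈ Icc a b)
    (s : ℝ) (hs : s ∈ Icc x₁ x₂) (hgs : g s ≤ y₁)
    (t : ℝ) (ht : t ∈ Icc x₁ x₂) (hgt : y₂ ≤ g t)
    (u : ℝ) (hu : u ∈ Icc y₁ y₂) (hgu : g u ≤ x₁)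
    (v : ℝ) (hv : v ∈ Icc y₁ y₂) (hgv : x₂ ≤ g v)
    (hsep : x₂ < y₁ ∨ g x₂ ≠ x₂) :
    ∃ z ∈ Icc a b, g (g z) = z ∧ g z ≠ z := by
  have hx₂ : x₂ ∈ Icc a b := ⟨hx₁.1.trans h12, (h23.trans h34).trans hy₂.2⟩
  have hy₁ : y₁ ∈ Icc a b := ⟨hx₁.1.trans (h12.trans h23), h34.trans hy₂.2⟩
  have hsub_A : Icc x₁ x₂ ⊆ Icc a b := Icc_subset_Icc hx₁.1 hx₂.2
  have hsub_B : Icc y₁ y₂ ⊆ Icc a b := Icc_subset_Icc hy₁.1 hy₂.2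
  -- step 1: K' ⊆ hull(u,v) ⊆ B with g(K') covering [x₁,x₂] with endpoint control
  obtain ⟨k₁', k₂', hk12', hmin', hmax', hor', hall'⟩ :=
    cover_pair g a b hg u v x₁ x₂ (hsub_B hu) (hsub_B hv) h12 hgu hgv
  have hk₁'B : k₁' ∈ Icc y₁ y₂ := ⟨le_trans (le_min hu.1 hv.1) hmin',
    hk12'.trans (hmax'.trans (max_le hu.2 hv.2))⟩
  have hk₂'B : k₂' ∈ Icc y₁ y₂ := ⟨hk₁'B.1.trans hk12', hmax'.trans (max_le hu.2 hv.2)⟩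
  -- step 2: K ⊆ hull(s,t) ⊆ A with g(K) covering [k₁',k₂']
  obtain ⟨k₁, k₂, hk12, hmin, hmax, hor, hall⟩ :=
    cover_pair g a b hg s t k₁' k₂' (hsub_A hs) (hsub_A ht) hk12'
      (hgs.trans hk₁'B.1) (hk₂'B.2.trans hgt)
  have hk₁A : k₁ ∈ Icc x₁ x₂ := ⟨le_trans (le_min hs.1 ht.1) hmin,
    hk12.trans (hmax.trans (max_le hs.2 ht.2))⟩
  have hk₂A : k₂ ∈ Icc x₁ x₂ := ⟨hk₁A.1.trans hk12, hmax.trans (max_le hs.2 ht.2)⟩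
  -- continuity of g ∘ g on [k₁, k₂]
  have hmapsK : ∀ w ∈ Icc k₁ k₂, g w ∈ Icc a b := fun w hw => hsub_B ⟨hk₁'B.1.trans (hall w hw).1,
    (hall w hw).2.trans hk₂'B.2⟩
  have hgg : ContinuousOn (fun w => g (g w)) (Icc k₁ k₂) :=
    hg.comp (hg.mono (Icc_subset_Icc (hsub_A hk₁A).1 (hsub_A hk₂A).2)) hmapsK
  -- sign analysis
  have key : ∃ z ∈ Icc k₁ k₂, g (g z) = z := by
    have hggk : (g (g k₁) = x₁ ∧ g (g k₂) = x₂) ∨ (g (g k₁) = x₂ ∧ g (g k₂) = x₁) := by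
      rcases hor with ⟨e1, e2⟩ | ⟨e1, e2⟩ <;> rcases hor' with ⟨f1, f2⟩ | ⟨f1, f2⟩ <;>
        simp [e1, e2, f1, f2]
    have hcont : ContinuousOn (fun w => g (g w) - w) (Icc k₁ k₂) :=
      hgg.sub continuousOn_id
    rcases hggk with ⟨e1, e2⟩ | ⟨e1, e2⟩
    · have h0 : (0:ℝ) ∈ Icc (g (g k₁) - k₁) (g (g k₂) - k₂) := by
        rw [Set.mem_Icc, e1, e2]
        constructor <;> linarith [hk₁A.1, hk₂A.2]
      obtain ⟨z, hz, hz0⟩ := intermediate_value_Icc hk12 hcont h0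
      have hz0' : g (g z) - z = 0 := hz0
      exact ⟨z, hz, by linarith⟩
    · have h0 : (0:ℝ) ∈ Icc (g (g k₂) - k₂) (g (g k₁) - k₁) := by
        rw [Set.mem_Icc, e1, e2]
        constructor <;> linarith [hk₁A.1, hk₂A.2, hk12]
      obtain ⟨z, hz, hz0⟩ := intermediate_value_Icc' hk12 hcont h0
      have hz0' : g (g z) - z = 0 := hz0
      exact ⟨z, hz, by linarith⟩
  obtain ⟨z, hz, hzfix⟩ := key
  have hzA : z ∈ Icc x₁ x₂ := ⟨hk₁A.1.trans hz.1, hz.2.trans hk₂A.2⟩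
  have hgzB : g z ∈ Icc y₁ y₂ := ⟨hk₁'B.1.trans (hall z hz).1, (hall z hz).2.trans hk₂'B.2⟩
  refine ⟨z, hsub_A hzA, hzfix, ?_⟩
  intro hfix
  have h1 : z = x₂ := le_antisymm hzA.2 (by linarith [hgzB.1, hfix ▸ hgzB.1, h23])
  rcases hsep with hlt | hne
  · have : z ≤ x₂ := hzA.2
    have : y₁ ≤ z := hfix ▸ hgzB.1
    linarith
  · exact hne (h1 ▸ hfix)

/-- A continuous map with a finite "cycle" (no fixed points, no proper invariant subset)
has a point of period exactly two. -/
lemma exists_period_two (a b : ℝ) (g : ℝ → ℝ) (hg : ContinuousOn g (Icc a b))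
    (O : Finset ℝ) (hO : ∀ w ∈ O, w ∈ Icc a b) (hne : O.Nonempty)
    (hinv : ∀ w ∈ O, g w ∈ O) (hnf : ∀ w ∈ O, g w ≠ w)
    (hmin : ∀ T : Finset ℝ, T ⊆ O → T.Nonempty → (∀ w ∈ T, g w ∈ T) → T = O) :
    ∃ z ∈ Icc a b, g (g z) = z ∧ g z ≠ z := by
  classical
  -- surjectivity of g on O
  have hsurj : ∀ w ∈ O, ∃ w' , w' ∈ O ∧ g w' = w := by
    have hT : O.filter (fun w => ∃ w', w' ∈ O ∧ g w' = w) = O := by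
      apply hmin _ (Finset.filter_subset _ _)
      · obtain ⟨w₀, hw₀⟩ := hne
        exact ⟨g w₀, Finset.mem_filter.mpr ⟨hinv _ hw₀, w₀, hw₀, rfl⟩⟩
      · intro w hw
        have hwO := (Finset.mem_filter.mp hw).1
        exact Finset.mem_filter.mpr ⟨hinv _ hwO, w, hwO, rfl⟩
    intro w hw
    have hw' : w ∈ O.filter (fun w => ∃ w', w' ∈ O ∧ g w' = w) := by rw [hT]; exact hw
    exact (Finset.mem_filter.mp hw').2
  -- p : largest ascending point
  have hAne : (O.filter (fun w => w < g w)).Nonempty := by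
    set w₀ := O.min' hne with hw₀
    have hw₀O : w₀ ∈ O := O.min'_mem hne
    have h1 : w₀ ≤ g w₀ := O.min'_le _ (hinv _ hw₀O)
    exact ⟨w₀, Finset.mem_filter.mpr ⟨hw₀O, lt_of_le_of_ne h1 (Ne.symm (hnf _ hw₀O))⟩⟩
  set p := (O.filter (fun w => w < g w)).max' hAne with hpdef
  have hpfact := Finset.mem_filter.mp ((O.filter (fun w => w < g w)).max'_mem hAne)
  have hpO : p ∈ O := hpfact.1
  have hpg : p < g p := hpfact.2
  have hdesc : ∀ w ∈ O, p < w → g w < w := by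
    intro w hwO hpw
    rcases lt_or_ge w (g w) with h | h
    · exact absurd (Finset.le_max' (O.filter (fun w => w < g w)) w
        (Finset.mem_filter.mpr ⟨hwO, h⟩)) (not_le.mpr hpw)
    · exact lt_of_le_of_ne h (hnf _ hwO)
  have hQne : (O.filter (fun w => p < w)).Nonempty :=
    ⟨g p, Finset.mem_filter.mpr ⟨hinv _ hpO, hpg⟩⟩
  set q := (O.filter (fun w => p < w)).min' hQne with hqdef
  have hqfact := Finset.mem_filter.mp ((O.filter (fun w => p < w)).min'_mem hQne)
  have hqO : q ∈ O := hqfact.1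
  have hpq : p < q := hqfact.2
  have hqle : ∀ w ∈ O, p < w → q ≤ w := fun w hw h =>
    Finset.min'_le _ _ (Finset.mem_filter.mpr ⟨hw, h⟩)
  have hsplit : ∀ w ∈ O, w ≤ p ∨ q ≤ w := by
    intro w hw
    rcases le_or_gt w p with h | h
    · exact Or.inl h
    · exact Or.inr (hqle w hw h)
  have hgq : g q ≤ p := by
    have h1 : g q < q := hdesc q hqO hpq
    rcases hsplit (g q) (hinv _ hqO) with h | h
    · exact h
    · linarith
  have hgp : q ≤ g p := hqle _ (hinv _ hpO) hpg
  -- main induction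
  have AUX : ∀ N : ℕ, ∀ x y : ℝ, x ∈ O → y ∈ O → x ≤ p → q ≤ y →
      (∃ t₁, t₁ ∈ O ∧ x ≤ t₁ ∧ t₁ ≤ p ∧ y ≤ g t₁) →
      (∃ u₁, u₁ ∈ O ∧ q ≤ u₁ ∧ u₁ ≤ y ∧ g u₁ ≤ x) →
      (O.filter (fun w => w < x ∨ y < w)).card ≤ N →
      ∃ z ∈ Icc a b, g (g z) = z ∧ g z ≠ z := by
    intro N
    induction N using Nat.strong_induction_on with
    | _ N ihN =>
    intro x y hxO hyO hxp hqy hI1 hI2 hcard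
    obtain ⟨t₁, ht₁O, ht₁1, ht₁2, ht₁3⟩ := hI1
    obtain ⟨u₁, hu₁O, hu₁1, hu₁2, hu₁3⟩ := hI2
    have hxq : x ≤ q := hxp.trans hpq.le
    by_cases hW1 : ∃ v₁, v₁ ∈ O ∧ q ≤ v₁ ∧ v₁ ≤ y ∧ q ≤ g v₁
    · obtain ⟨v₁, hv₁O, hv₁1, hv₁2, hv₁3⟩ := hW1
      exact two_loop a b g hg x q q y hxq le_rfl hqy (hO x hxO) (hO y hyO)
        q ⟨hxq, le_rfl⟩ (hgq.trans hpq.le)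
        t₁ ⟨ht₁1, ht₁2.trans hpq.le⟩ ht₁3
        u₁ ⟨hu₁1, hu₁2⟩ hu₁3
        v₁ ⟨hv₁1, hv₁2⟩ hv₁3
        (Or.inr (hnf q hqO))
    by_cases hW2 : ∃ s₁, s₁ ∈ O ∧ x ≤ s₁ ∧ s₁ ≤ p ∧ g s₁ ≤ p
    · obtain ⟨s₁, hs₁O, hs₁1, hs₁2, hs₁3⟩ := hW2
      exact two_loop a b g hg x p p y hxp le_rfl (hpq.le.trans hqy) (hO x hxO) (hO y hyO)
        s₁ ⟨hs₁1, hs₁2⟩ hs₁3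
        t₁ ⟨ht₁1, ht₁2⟩ ht₁3
        u₁ ⟨hpq.le.trans hu₁1, hu₁2⟩ hu₁3
        p ⟨le_rfl, hpq.le.trans hqy⟩ ((hpq.trans_le hgp).le)
        (Or.inr (hnf p hpO))
    -- no direct win : derive structure
    have hnW1 : ∀ t ∈ O, q ≤ t → t ≤ y → g t ≤ p := by
      intro t htO h1 h2
      by_contra hcon
      push_neg at hcon
      exact hW1 ⟨t, htO, h1, h2, hqle _ (hinv _ htO) hcon⟩
    have hnW2 : ∀ t ∈ O, x ≤ t → t ≤ p → q ≤ g t := by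
      intro t htO h1 h2
      by_contra hcon
      push_neg at hcon
      rcases hsplit (g t) (hinv _ htO) with h | h
      · exact hW2 ⟨t, htO, h1, h2, h⟩
      · linarith
    set R := O.filter (fun w => q ≤ w ∧ w ≤ y) with hRdef
    have hqR : q ∈ R := Finset.mem_filter.mpr ⟨hqO, le_rfl, hqy⟩
    have hRIne : (R.image g).Nonempty := ⟨g q, Finset.mem_image_of_mem g hqR⟩
    set x' := (R.image g).min' hRIne with hx'def
    obtain ⟨τ, hτR, hτ⟩ := Finset.mem_image.mp ((R.image g).min'_mem hRIne)
    have hτO : τ ∈ O := (Finset.mem_filter.mp hτR).1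
    have hτ1 : q ≤ τ := (Finset.mem_filter.mp hτR).2.1
    have hτ2 : τ ≤ y := (Finset.mem_filter.mp hτR).2.2
    have hx'O : x' ∈ O := by rw [hx'def, ← hτ]; exact hinv _ hτO
    have hx'le : x' ≤ x := le_trans (Finset.min'_le _ _
      (Finset.mem_image_of_mem g (Finset.mem_filter.mpr ⟨hu₁O, hu₁1, hu₁2⟩))) hu₁3
    have hx'p : x' ≤ p := hx'le.trans hxp
    set L := O.filter (fun w => x' ≤ w ∧ w ≤ p) with hLdef
    have hpL : p ∈ L := Finset.mem_filter.mpr ⟨hpO, hx'p, le_rfl⟩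
    have hLIne : (L.image g).Nonempty := ⟨g p, Finset.mem_image_of_mem g hpL⟩
    set y' := (L.image g).max' hLIne with hy'def
    obtain ⟨lam, hlamL, hlam⟩ := Finset.mem_image.mp ((L.image g).max'_mem hLIne)
    have hlamO : lam ∈ O := (Finset.mem_filter.mp hlamL).1
    have hlam1 : x' ≤ lam := (Finset.mem_filter.mp hlamL).2.1
    have hlam2 : lam ≤ p := (Finset.mem_filter.mp hlamL).2.2
    have hy'O : y' ∈ O := by rw [hy'def, ← hlam]; exact hinv _ hlamO
    have hy'ge : y ≤ y' := le_trans ht₁3 (Finset.le_max' _ _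
      (Finset.mem_image_of_mem g (Finset.mem_filter.mpr ⟨ht₁O, hx'le.trans ht₁1, ht₁2⟩)))
    by_cases hstuck : x' = x ∧ y' = y
    · -- stuck : the orbit is contained in [x, y] and fully crossing
      obtain ⟨hsx, hsy⟩ := hstuck
      have hVinv : ∀ w ∈ O.filter (fun w => x ≤ w ∧ w ≤ y),
          g w ∈ O.filter (fun w => x ≤ w ∧ w ≤ y) := by
        intro w hw
        obtain ⟨hwO, hw1, hw2⟩ := Finset.mem_filter.mp hw
        rcases hsplit w hwO with hle | hge
        · have hwL : w ∈ L := Finset.mem_filter.mpr ⟨hwO, hsx ▸ hw1, hle⟩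
          have h1 : g w ≤ y := hsy ▸ Finset.le_max' _ _ (Finset.mem_image_of_mem g hwL)
          have h2 : q ≤ g w := hnW2 w hwO hw1 hle
          exact Finset.mem_filter.mpr ⟨hinv _ hwO, le_trans (hxq) h2, h1⟩
        · have hwR : w ∈ R := Finset.mem_filter.mpr ⟨hwO, hge, hw2⟩
          have h1 : x ≤ g w := hsx ▸ Finset.min'_le _ _ (Finset.mem_image_of_mem g hwR)
          have h2 : g w ≤ p := hnW1 w hwO hge hw2
          exact Finset.mem_filter.mpr ⟨hinv _ hwO, h1, h2.trans (hpq.le.trans hqy)⟩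
      have hVO : O.filter (fun w => x ≤ w ∧ w ≤ y) = O :=
        hmin _ (Finset.filter_subset _ _)
          ⟨p, Finset.mem_filter.mpr ⟨hpO, hxp, hpq.le.trans hqy⟩⟩ hVinv
      have hall : ∀ w ∈ O, x ≤ w ∧ w ≤ y := by
        intro w hw
        have hw' : w ∈ O.filter (fun w => x ≤ w ∧ w ≤ y) := by rw [hVO]; exact hw
        exact (Finset.mem_filter.mp hw').2
      -- preimages
      obtain ⟨pq, hpqO, hpqv⟩ := hsurj q hqO
      obtain ⟨py, hpyO, hpyv⟩ := hsurj y hyO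
      obtain ⟨px, hpxO, hpxv⟩ := hsurj x hxO
      obtain ⟨pp, hppO, hppv⟩ := hsurj p hpO
      have hpq_loc : pq ≤ p := by
        rcases hsplit pq hpqO with h | h
        · exact h
        · have := hnW1 pq hpqO h (hall pq hpqO).2
          rw [hpqv] at this; linarith
      have hpy_loc : py ≤ p := by
        rcases hsplit py hpyO with h | h
        · exact h
        · have := hnW1 py hpyO h (hall py hpyO).2
          rw [hpyv] at this; linarith
      have hpx_loc : q ≤ px := by
        rcases hsplit px hpxO with h | h
        · have := hnW2 px hpxO (hall px hpxO).1 h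
          rw [hpxv] at this; linarith
        · exact h
      have hpp_loc : q ≤ pp := by
        rcases hsplit pp hppO with h | h
        · have := hnW2 pp hppO (hall pp hppO).1 h
          rw [hppv] at this; linarith
        · exact h
      exact two_loop a b g hg x p q y hxp hpq.le hqy (hO x hxO) (hO y hyO)
        pq ⟨(hall pq hpqO).1, hpq_loc⟩ (le_of_eq hpqv)
        py ⟨(hall py hpyO).1, hpy_loc⟩ (le_of_eq hpyv.symm)
        px ⟨hpx_loc, (hall px hpxO).2⟩ (le_of_eq hpxv)
        pp ⟨hpp_loc, (hall pp hppO).2⟩ (le_of_eq hppv.symm)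
        (Or.inl hpq)
    · -- not stuck : extend and recurse
      have hprog : x' < x ∨ y < y' := by
        rcases lt_or_eq_of_le hx'le with h | h
        · exact Or.inl h
        rcases lt_or_eq_of_le hy'ge with h2 | h2
        · exact Or.inr h2
        · exact absurd ⟨h, h2.symm⟩ hstuck
      have hsub : O.filter (fun w => w < x' ∨ y' < w) ⊆ O.filter (fun w => w < x ∨ y < w) := by
        intro w hw
        obtain ⟨hwO, hwp⟩ := Finset.mem_filter.mp hw
        refine Finset.mem_filter.mpr ⟨hwO, ?_⟩
        rcases hwp with h | h
        · exact Or.inl (lt_of_lt_of_le h hx'le)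
        · exact Or.inr (lt_of_le_of_lt hy'ge h)
      have hssub : O.filter (fun w => w < x' ∨ y' < w) ⊂ O.filter (fun w => w < x ∨ y < w) := by
        refine (Finset.ssubset_iff_of_subset hsub).mpr ?_
        rcases hprog with h | h
        · refine ⟨x', Finset.mem_filter.mpr ⟨hx'O, Or.inl h⟩, ?_⟩
          intro hcon
          rcases (Finset.mem_filter.mp hcon).2 with h2 | h2
          · exact lt_irrefl _ h2
          · have : q ≤ y' := hqy.trans hy'ge
            linarith
        · refine ⟨y', Finset.mem_filter.mpr ⟨hy'O, Or.inr h⟩, ?_⟩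
          intro hcon
          rcases (Finset.mem_filter.mp hcon).2 with h2 | h2
          · have : x' ≤ p := hx'p
            have : q ≤ y' := hqy.trans hy'ge
            linarith
          · exact lt_irrefl _ h2
      have hcard' : (O.filter (fun w => w < x' ∨ y' < w)).card < N :=
        lt_of_lt_of_le (Finset.card_lt_card hssub) hcard
      exact ihN _ hcard' x' y' hx'O hy'O hx'p (hqy.trans hy'ge)
        ⟨lam, hlamO, hlam1, hlam2, le_of_eq hlam.symm⟩
        ⟨τ, hτO, hτ1, hτ2.trans hy'ge, le_of_eq hτ⟩
        le_rfl
  exact AUX (O.filter (fun w => w < p ∨ g p < w)).card p (g p) hpO (hinv _ hpO) le_rfl hgp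
    ⟨p, hpO, le_rfl, le_rfl, le_rfl⟩ ⟨q, hqO, le_rfl, hgp, hgq⟩ le_rfl

/-- If a continuous self-map of `[a,b]` has a periodic point of minimal period `m ≥ 2`,
then it has a point of period exactly 2. -/
lemma period_two_of_periodic (a b : ℝ) (g : ℝ → ℝ) (hg : ContinuousOn g (Icc a b))
    (hmaps : MapsTo g (Icc a b) (Icc a b)) (x₀ : ℝ) (hx₀ : x₀ ∈ Icc a b)
    (hm : 2 ≤ minimalPeriod g x₀) :
    ∃ z ∈ Icc a b, g (g z) = z ∧ g z ≠ z := by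
  classical
  set m := minimalPeriod g x₀ with hmdef
  have hmpos : 0 < m := by omega
  have hper : g^[m] x₀ = x₀ := isPeriodicPt_minimalPeriod g x₀
  have hppts : x₀ ∈ periodicPts g := mk_mem_periodicPts hmpos (isPeriodicPt_minimalPeriod g x₀)
  set O : Finset ℝ := (Finset.range m).image (fun j => g^[j] x₀) with hOdef
  have hmemO : ∀ w, w ∈ O ↔ ∃ j, j < m ∧ g^[j] x₀ = w := by
    intro w
    simp [hOdef, Finset.mem_image, Finset.mem_range]
  have hiterO : ∀ k : ℕ, g^[k] x₀ ∈ O := by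
    intro k
    rw [hmemO]
    refine ⟨k % m, Nat.mod_lt _ hmpos, ?_⟩
    conv_rhs => rw [← iterate_mod_minimalPeriod_eq (f := g) (n := k) (x := x₀)]
  apply exists_period_two a b g hg O
  · intro w hw
    obtain ⟨j, _, hj⟩ := (hmemO w).mp hw
    rw [← hj]
    exact hmaps.iterate j hx₀
  · exact ⟨x₀, (hmemO x₀).mpr ⟨0, hmpos, rfl⟩⟩
  · intro w hw
    obtain ⟨j, hjm, hj⟩ := (hmemO w).mp hw
    rw [← hj]
    have h2 := hiterO (j + 1)
    rwa [iterate_succ_apply'] at h2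
  · intro w hw
    obtain ⟨j, hjm, hj⟩ := (hmemO w).mp hw
    intro hfix
    have hwper : minimalPeriod g w = m := by
      rw [← hj, minimalPeriod_apply_iterate hppts]
    have : IsPeriodicPt g 1 w := by
      simpa [IsPeriodicPt, IsFixedPt] using hfix
    have hdvd := this.minimalPeriod_dvd
    rw [hwper] at hdvd
    have := Nat.le_of_dvd Nat.one_pos hdvd
    omega
  · intro T hTO hTne hTinv
    obtain ⟨w₀, hw₀⟩ := hTne
    obtain ⟨j₀, hj₀m, hj₀⟩ := (hmemO w₀).mp (hTO hw₀)
    have hiterT : ∀ k : ℕ, g^[k] w₀ ∈ T := by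
      intro k
      induction k with
      | zero => simpa using hw₀
      | succ k ih => rw [iterate_succ_apply']; exact hTinv _ ih
    apply Finset.Subset.antisymm hTO
    intro w hw
    obtain ⟨j, hjm, hj⟩ := (hmemO w).mp hw
    have key : g^[j + (m - j₀)] w₀ = w := by
      rw [← hj₀, ← iterate_add_apply]
      have he : j + (m - j₀) + j₀ = j + m := by omega
      rw [he, iterate_add_apply, hper, hj]
    rw [← key]
    exact hiterT _

theorem period_not_pow_two_implies_all_pow_two (a b : ℝ) (hab : a ≤ b) (f : ℝ → ℝ)
    (hc : ContinuousOn f (Set.Icc a b))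
    (hmaps : Set.MapsTo f (Set.Icc a b) (Set.Icc a b))
    (n : ℕ) (hn : 0 < n) (hnpow : ¬ ∃ i : ℕ, n = 2 ^ i)
    (x : ℝ) (hx : x ∈ Set.Icc a b)
    (hper : f^[n] x = x ∧ ∀ k, 0 < k → k < n → f^[k] x ≠ x)
    (i : ℕ) :
    ∃ y ∈ Set.Icc a b, f^[2 ^ i] y = y ∧ ∀ k, 0 < k → k < 2 ^ i → f^[k] y ≠ y := by
  have hxper : IsPeriodicPt f n x := hper.1
  have hminx : minimalPeriod f x = n := by
    have hd := hxper.minimalPeriod_dvd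
    have hpos : 0 < minimalPeriod f x := hxper.minimalPeriod_pos hn
    rcases lt_or_eq_of_le (Nat.le_of_dvd hn hd) with h | h
    · exact absurd (isPeriodicPt_minimalPeriod f x) (hper.2 _ hpos h)
    · exact h
  have hitc : ∀ k : ℕ, ContinuousOn (f^[k]) (Icc a b) := by
    intro k
    induction k with
    | zero => simpa using continuousOn_id
    | succ k ih =>
      rw [Function.iterate_succ' f k]
      exact hc.comp ih (hmaps.iterate k)
  cases i with
  | zero =>
    have hcont : ContinuousOn (fun w => f w - w) (Icc a b) := hc.sub continuousOn_id
    have ha' : a ∈ Icc a b := ⟨le_rfl, hab⟩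
    have hb' : b ∈ Icc a b := ⟨hab, le_rfl⟩
    have h0 : (0:ℝ) ∈ Icc (f b - b) (f a - a) := by
      constructor
      · linarith [(hmaps hb').2]
      · linarith [(hmaps ha').1]
    obtain ⟨y, hy, hy0⟩ := intermediate_value_Icc' hab hcont h0
    have hyfix : f y = y := by
      have : f y - y = 0 := hy0
      linarith
    refine ⟨y, hy, ?_, ?_⟩
    · simpa using hyfix
    · intro k hk1 hk2
      omega
  | succ i' =>
    set g := f^[2^i'] with hgdef
    have hgc : ContinuousOn g (Icc a b) := hitc (2^i')
    have hgmaps : MapsTo g (Icc a b) (Icc a b) := hmaps.iterate (2^i')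
    have hgper : minimalPeriod g x = n / Nat.gcd n (2^i') := by
      rw [hgdef, minimalPeriod_iterate_eq_div_gcd (pow_ne_zero i' two_ne_zero), hminx]
    have hm2 : 2 ≤ minimalPeriod g x := by
      rw [hgper]
      have hgcd_dvd : Nat.gcd n (2^i') ∣ n := Nat.gcd_dvd_left _ _
      have hgpos : 0 < Nat.gcd n (2^i') := Nat.gcd_pos_of_pos_left _ hn
      have h1 : 0 < n / Nat.gcd n (2^i') := Nat.div_pos (Nat.le_of_dvd hn hgcd_dvd) hgpos
      by_contra hcon
      push_neg at hcon
      have heq1 : n / Nat.gcd n (2^i') = 1 := by omega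
      have hnd : n = Nat.gcd n (2^i') := by
        conv_lhs => rw [← Nat.div_mul_cancel hgcd_dvd]
        rw [heq1, one_mul]
      have hdv : n ∣ 2^i' := hnd ▸ Nat.gcd_dvd_right n (2^i')
      obtain ⟨j, _, hj⟩ := (Nat.dvd_prime_pow Nat.prime_two).mp hdv
      exact hnpow ⟨j, hj⟩
    obtain ⟨z, hz, hz2, hz1⟩ := period_two_of_periodic a b g hgc hgmaps x hx hm2
    have hz2' : f^[2^(i'+1)] z = z := by
      have h2 : (2:ℕ)^(i'+1) = 2^i' + 2^i' := by ring
      rw [h2, iterate_add_apply]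
      exact hz2
    refine ⟨z, hz, hz2', ?_⟩
    have hzper : IsPeriodicPt f (2^(i'+1)) z := hz2'
    have hdvd := hzper.minimalPeriod_dvd
    obtain ⟨j, hj_le, hjeq⟩ := (Nat.dvd_prime_pow Nat.prime_two).mp hdvd
    have hj_eq : j = i' + 1 := by
      by_contra hne
      have hj_le' : j ≤ i' := by omega
      have hdv2 : minimalPeriod f z ∣ 2^i' := by
        rw [hjeq]
        exact pow_dvd_pow 2 hj_le'
      have hpp : IsPeriodicPt f (2^i') z := isPeriodicPt_iff_minimalPeriod_dvd.mpr hdv2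
      exact hz1 hpp
    intro k hk0 hkl hfk
    have hdk : minimalPeriod f z ∣ k := (show IsPeriodicPt f k z from hfk).minimalPeriod_dvd
    rw [hjeq, hj_eq] at hdk
    have := Nat.le_of_dvd hk0 hdk
    omega
end

section
/- Let π be a cyclic permutation of {1,…,n} with n ≥ 2, and A_π the induced operator on integer segments, A_π|i₁,i₂| = |min π(i), max π(i)| over i ∈ |i₁,i₂|. Then A_π|i₁,i₂| ⊆ |i₁,i₂| if and only if |i₁,i₂| = |1,n|. -/
/-!
If `A_π |i₁, i₂| ⊆ |i₁, i₂|`, then `π` maps the segment into itself, hence so do all powers of `π`.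
On a finite set the forward orbit of a point is its whole cycle, and `π` is a single cycle through
`i₁`, so the segment contains every point.
-/

theorem Finset.mem_Icc_inf'_sup' {ι α : Type*} [Lattice α] [LocallyFiniteOrder α]
    {s : Finset ι} (hs : s.Nonempty) (f : ι → α) {i : ι} (hi : i ∈ s) :
    f i ∈ Finset.Icc (s.inf' hs f) (s.sup' hs f) :=
  Finset.mem_Icc.mpr ⟨Finset.inf'_le f hi, Finset.le_sup' f hi⟩

theorem Equiv.Perm.SameCycle.mem_of_mapsTo {α : Type*} [Finite α] {f : Equiv.Perm α}
    {s : Set α} (hs : Set.MapsTo f s s) {x y : α} (hxy : f.SameCycle x y) (hx : x ∈ s) :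
    y ∈ s := by
  obtain ⟨k, rfl⟩ := hxy.exists_nat_pow_eq
  rw [Equiv.Perm.coe_pow]
  exact hs.iterate k hx

theorem Api_subset_iff (n : ℕ) (hn : 2 ≤ n) (π : Equiv.Perm (Fin n))
    (hcyc : ∀ j : Fin n, ∃ k : ℕ, (π ^ k) ⟨0, by omega⟩ = j)
    (i₁ i₂ : Fin n) (h : i₁ < i₂) :
    (Finset.Icc ((Finset.Icc i₁ i₂).inf' (Finset.nonempty_Icc.mpr h.le) ⇑π)
        ((Finset.Icc i₁ i₂).sup' (Finset.nonempty_Icc.mpr h.le) ⇑π) ⊆ Finset.Icc i₁ i₂) ↔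
      Finset.Icc i₁ i₂ = Finset.univ := by
  have hsame : ∀ j, π.SameCycle ⟨0, by omega⟩ j := fun j => by
    obtain ⟨k, rfl⟩ := hcyc j
    exact Equiv.Perm.sameCycle_pow_right.mpr (Equiv.Perm.SameCycle.refl π _)
  refine ⟨fun hsub => ?_, fun huniv x _ => huniv ▸ Finset.mem_univ x⟩
  have hmaps : Set.MapsTo π (Finset.Icc i₁ i₂ : Set (Fin n)) (Finset.Icc i₁ i₂) :=
    fun i hi => hsub (Finset.mem_Icc_inf'_sup' _ π hi)
  have hi₁ : i₁ ∈ Finset.Icc i₁ i₂ := Finset.mem_Icc.mpr ⟨le_rfl, h.le⟩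
  exact Finset.eq_univ_of_forall fun j =>
    ((hsame i₁).symm.trans (hsame j)).mem_of_mapsTo hmaps hi₁
end

section
/- Let π be a cyclic permutation of {1,…,n}, n > 2, and let i₀ = max{i ≤ n-1 : π(i) > i}. Then there exists a natural number k with 1 ≤ k ≤ n-2 such that the iterated images satisfy |i₀,i₀+1| ⊆ A_π|i₀,i₀+1| ⊆ A_π²|i₀,i₀+1| ⊆ ⋯ ⊆ A_π^k|i₀,i₀+1| = |1,n|. -/
/-- The operator `A_π` on segments (here on arbitrary finsets, sending a nonempty
finset to the segment spanned by the `π`-images of its elements). -/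
def Api {n : ℕ} (π : Equiv.Perm (Fin n)) (s : Finset (Fin n)) : Finset (Fin n) :=
  if hs : s.Nonempty then Finset.Icc (s.inf' hs ⇑π) (s.sup' hs ⇑π) else ∅

lemma Api_mono {n : ℕ} (π : Equiv.Perm (Fin n)) {s t : Finset (Fin n)}
    (hs : s.Nonempty) (hst : s ⊆ t) : Api π s ⊆ Api π t := by
  have ht : t.Nonempty := hs.mono hst
  simp only [Api, dif_pos hs, dif_pos ht]
  apply Finset.Icc_subset_Icc
  · exact Finset.le_inf' hs _ fun b hb => Finset.inf'_le _ (hst hb)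
  · exact Finset.sup'_le hs _ fun b hb => Finset.le_sup' _ (hst hb)

lemma mem_Api {n : ℕ} (π : Equiv.Perm (Fin n)) {s : Finset (Fin n)}
    (hs : s.Nonempty) {i : Fin n} (hi : i ∈ s) : π i ∈ Api π s := by
  simp only [Api, dif_pos hs, Finset.mem_Icc]
  exact ⟨Finset.inf'_le _ hi, Finset.le_sup' _ hi⟩

lemma closed_eq_univ {n : ℕ} (hn : 0 < n) (π : Equiv.Perm (Fin n))
    (hcyc : ∀ j : Fin n, ∃ k : ℕ, (π ^ k) ⟨0, hn⟩ = j)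
    {s : Finset (Fin n)} (hne : s.Nonempty)
    (hcl : ∀ i ∈ s, π i ∈ s) : s = Finset.univ := by
  obtain ⟨x, hx⟩ := hne
  have hiter : ∀ t : ℕ, (π ^ t) x ∈ s := by
    intro t
    induction t with
    | zero => simpa using hx
    | succ t ih =>
      have : π ^ (t + 1) = π * π ^ t := by rw [pow_succ']
      rw [this, Equiv.Perm.mul_apply]
      exact hcl _ ih
  apply Finset.eq_univ_of_forall
  intro j
  obtain ⟨m, hm⟩ := hcyc j
  obtain ⟨k, hk⟩ := hcyc x
  set N := orderOf π with hN
  have hNpos : 0 < N := orderOf_pos π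
  have hkN : k ≤ m + N * k := by nlinarith
  have he : (π ^ (m + N * k)) ⟨0, hn⟩ = j := by
    rw [pow_add, pow_mul, pow_orderOf_eq_one, one_pow, mul_one, hm]
  have hsplit : (π ^ (m + N * k)) ⟨0, hn⟩ = (π ^ (m + N * k - k)) x := by
    have hdecomp : m + N * k = (m + N * k - k) + k := by omega
    conv_lhs => rw [hdecomp]
    rw [pow_add, Equiv.Perm.mul_apply, hk]
  rw [← he, hsplit]
  exact hiter _

theorem Api_iterates_reach_univ (n : ℕ) (hn : 2 < n) (π : Equiv.Perm (Fin n))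
    (hcyc : ∀ j : Fin n, ∃ k : ℕ, (π ^ k) ⟨0, by omega⟩ = j)
    (i₀ : Fin n) (hi₀ : i₀ < π i₀) (hmax : ∀ i : Fin n, i < π i → i ≤ i₀)
    (h1 : (i₀ : ℕ) + 1 < n) :
    ∃ k : ℕ, 1 ≤ k ∧ k ≤ n - 2 ∧
      (∀ j < k, (Api π)^[j] (Finset.Icc i₀ ⟨(i₀ : ℕ) + 1, h1⟩) ⊆
        (Api π)^[j + 1] (Finset.Icc i₀ ⟨(i₀ : ℕ) + 1, h1⟩)) ∧
      (Api π)^[k] (Finset.Icc i₀ ⟨(i₀ : ℕ) + 1, h1⟩) = Finset.univ := by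
  have hn0 : 0 < n := by omega
  have hcyc' : ∀ j : Fin n, ∃ k : ℕ, (π ^ k) ⟨0, hn0⟩ = j := hcyc
  set i₁ : Fin n := ⟨(i₀ : ℕ) + 1, h1⟩ with hi₁def
  set s₀ : Finset (Fin n) := Finset.Icc i₀ i₁ with hs₀def
  set S : ℕ → Finset (Fin n) := fun j => (Api π)^[j] s₀ with hSdef
  have hi01 : i₀ ≤ i₁ := by
    rw [Fin.le_def]; simp [hi₁def]
  have hne0 : s₀.Nonempty := Finset.nonempty_Icc.2 hi01
  have hi0mem : i₀ ∈ s₀ := Finset.mem_Icc.2 ⟨le_refl _, hi01⟩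
  have hi1mem : i₁ ∈ s₀ := Finset.mem_Icc.2 ⟨hi01, le_refl _⟩
  -- no fixed points
  have hfix : ∀ j : Fin n, π j ≠ j := by
    intro j hj
    have h := closed_eq_univ hn0 π hcyc' (s := {j}) ⟨j, Finset.mem_singleton_self j⟩
      (by intro i hi; simp at hi; simp [hi, hj])
    have := congrArg Finset.card h
    simp [Finset.card_univ] at this
    omega
  -- π i₁ ≤ i₀ and i₁ ≤ π i₀
  have hpi1 : π i₁ ≤ i₀ := by
    have h2 : ¬ (i₁ < π i₁) := by
      intro h
      have := hmax i₁ h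
      rw [Fin.le_def] at this
      simp [hi₁def] at this
    have h3 : π i₁ ≠ i₁ := hfix i₁
    rw [Fin.le_def]
    have := Fin.lt_def.1 (lt_of_le_of_ne (not_lt.1 h2) h3)
    simp [hi₁def] at this ⊢
    omega
  have hpi0 : i₁ ≤ π i₀ := by
    rw [Fin.le_def]
    have := Fin.lt_def.1 hi₀
    simp [hi₁def]
    omega
  -- base: s₀ ⊆ Api π s₀
  have hbase : s₀ ⊆ Api π s₀ := by
    intro x hx
    rw [Finset.mem_Icc] at hx
    simp only [Api, dif_pos hne0, Finset.mem_Icc]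
    constructor
    · exact le_trans (le_trans (Finset.inf'_le _ hi1mem) hpi1) hx.1
    · exact le_trans hx.2 (le_trans hpi0 (Finset.le_sup' _ hi0mem))
  -- chain
  have hchain : ∀ j, s₀ ⊆ S j ∧ S j ⊆ S (j + 1) := by
    intro j
    induction j with
    | zero => exact ⟨subset_refl _, hbase⟩
    | succ j ih =>
      refine ⟨ih.1.trans ih.2, ?_⟩
      have h1' : S (j + 1) = Api π (S j) := Function.iterate_succ_apply' _ _ _
      have h2' : S (j + 2) = Api π (S (j + 1)) := Function.iterate_succ_apply' _ _ _
      rw [h1', h2']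
      exact Api_mono π (hne0.mono ih.1) ih.2
  have hSne : ∀ j, (S j).Nonempty := fun j => hne0.mono (hchain j).1
  -- growth
  have hgrow : ∀ j, S j = Finset.univ ∨ j + 2 ≤ (S j).card := by
    intro j
    induction j with
    | zero =>
      right
      have : (S 0).card = (Finset.Icc i₀ i₁).card := rfl
      rw [this, Fin.card_Icc]
      simp only [hi₁def]
      omega
    | succ j ih =>
      rcases ih with h | h
      · left
        exact Finset.univ_subset_iff.1 (h ▸ (hchain j).2)
      · by_cases hu : S (j + 1) = Finset.univ
        · left; exact hu
        · right
          have hne : S j ≠ S (j + 1) := by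
            intro heq
            apply hu
            have hstep : S (j + 1) = Api π (S j) := Function.iterate_succ_apply' _ _ _
            have hApi : Api π (S j) = S j := by rw [← hstep, ← heq]
            have : S j = Finset.univ := by
              apply closed_eq_univ hn0 π hcyc' (hSne j)
              intro i hi
              rw [← hApi]
              exact mem_Api π (hSne j) hi
            rw [← heq]; exact this
          have hlt : S j ⊂ S (j + 1) := ssubset_of_subset_of_ne (hchain j).2 hne
          have := Finset.card_lt_card hlt
          omega
  -- S (n-2) = univ
  have huniv : S (n - 2) = Finset.univ := by
    rcases hgrow (n - 2) with h | h
    · exact h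
    · apply Finset.eq_univ_of_card
      have hle : (S (n - 2)).card ≤ n := by
        have := Finset.card_le_univ (S (n - 2))
        simpa [Finset.card_univ] using this
      simp only [Fintype.card_fin]
      omega
  have hex : ∃ j, S j = Finset.univ := ⟨n - 2, huniv⟩
  set k := Nat.find hex with hk
  refine ⟨k, ?_, Nat.find_le huniv, fun j _ => (hchain j).2, Nat.find_spec hex⟩
  by_contra hk1
  have hk0 : k = 0 := by omega
  have := Nat.find_spec hex
  rw [← hk, hk0] at this
  have hcard : (Finset.Icc i₀ i₁).card = (Finset.univ : Finset (Fin n)).card :=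
    congrArg Finset.card this
  rw [Fin.card_Icc, Finset.card_univ, Fintype.card_fin] at hcard
  simp only [hi₁def] at hcard
  omega
end

section
/- Every cyclic permutation of odd length n > 1 belongs to the class 𝔄: with i₀ = max{i ≤ n-1 : π(i) > i}, there exists an element i* ∈ {1,…,n} such that i* and π(i*) both lie in {1,…,i₀} or both lie in {i₀+1,…,n}. -/
theorem odd_cycle_mem_A (n : ℕ) (hn : 1 < n) (hodd : Odd n) (π : Equiv.Perm (Fin n))
    (hcyc : ∀ j : Fin n, ∃ k : ℕ, (π ^ k) ⟨0, by omega⟩ = j)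
    (i₀ : Fin n) (hi₀ : i₀ < π i₀) (hmax : ∀ i : Fin n, i < π i → i ≤ i₀) :
    ∃ i : Fin n, (i ≤ i₀ ∧ π i ≤ i₀) ∨ (i₀ < i ∧ i₀ < π i) := by
  by_contra h
  push_neg at h
  set A : Finset (Fin n) := Finset.univ.filter (· ≤ i₀) with hA
  have himg1 : A.image π ⊆ Aᶜ := by
    intro j hj
    obtain ⟨i, hi, rfl⟩ := Finset.mem_image.mp hj
    simp only [hA, Finset.mem_filter, Finset.mem_compl, Finset.mem_univ, true_and] at hi ⊢
    exact not_le.mpr ((h i).1 hi)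
  have himg2 : Aᶜ.image π ⊆ A := by
    intro j hj
    obtain ⟨i, hi, rfl⟩ := Finset.mem_image.mp hj
    simp only [hA, Finset.mem_filter, Finset.mem_compl, Finset.mem_univ, true_and] at hi ⊢
    exact (h i).2 (lt_of_not_ge hi)
  have hinj : Function.Injective π := π.injective
  have hc1 : A.card ≤ Aᶜ.card := by
    calc A.card = (A.image π).card := (Finset.card_image_of_injective A hinj).symm
    _ ≤ Aᶜ.card := Finset.card_le_card himg1
  have hc2 : Aᶜ.card ≤ A.card := by
    calc Aᶜ.card = (Aᶜ.image π).card := (Finset.card_image_of_injective _ hinj).symm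
    _ ≤ A.card := Finset.card_le_card himg2
  have hsum : A.card + Aᶜ.card = n := by
    rw [Finset.card_add_card_compl]; simp
  have : n = 2 * A.card := by omega
  obtain ⟨k, hk⟩ := hodd
  omega
end
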